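/- arXiv:1905.03876 — 10 statements merged into one kernel-verified Lean document; each statement's English description precedes it below -/
import Mathlib

section
/- In the winner-bid auction with valuations v_l < v_h (both even positive integers), tie-breaker favoring the high-valuation agent, and bid set {0,...,p̄} with p̄ ≥ v_h/2, if σ = (σ_l, σ_h) is a Nash equilibrium, then there exists a bid p with v_l/2 ≤ p ≤ v_h/2 such that p is in the support of both σ_l and σ_h, the support of σ_l is contained in {0,...,p}, and the support of σ_h is contained in {p,...,p̄}. -/
open Finset Filter

/-- Payoff to the low-valuation agent in the winner-bid auction when she bids `b`
and the high-valuation agent bids `r` (ties won by the high-valuation agent). -/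
noncomputable def UlWB (vl : ℕ) (b r : ℕ) : ℝ := if r < b then (vl : ℝ) - b else (r : ℝ)

/-- Payoff to the high-valuation agent in the winner-bid auction when she bids `b`
and the low-valuation agent bids `r` (ties won by the high-valuation agent). -/
noncomputable def UhWB (vh : ℕ) (b r : ℕ) : ℝ := if r ≤ b then (vh : ℝ) - b else (r : ℝ)

/-- A mixed strategy on the bid set `{0, ..., pbar}`. -/
def IsMixed (pbar : ℕ) (σ : ℕ → ℝ) : Prop :=
  (∀ b, 0 ≤ σ b) ∧ (∀ b, pbar < b → σ b = 0) ∧ ∑ b ∈ Finset.range (pbar + 1), σ b = 1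

/-- Expected payoff for the low-valuation agent of bidding `b` against `σh`. -/
noncomputable def eUl (pbar vl : ℕ) (σh : ℕ → ℝ) (b : ℕ) : ℝ :=
  ∑ r ∈ Finset.range (pbar + 1), σh r * UlWB vl b r

/-- Expected payoff for the high-valuation agent of bidding `b` against `σl`. -/
noncomputable def eUh (pbar vh : ℕ) (σl : ℕ → ℝ) (b : ℕ) : ℝ :=
  ∑ r ∈ Finset.range (pbar + 1), σl r * UhWB vh b r

/-- Nash equilibrium of the winner-bid auction. -/
def IsNashWB (pbar vl vh : ℕ) (σl σh : ℕ → ℝ) : Prop :=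
  IsMixed pbar σl ∧ IsMixed pbar σh ∧
  (∀ b ≤ pbar, 0 < σl b → ∀ b' ≤ pbar, eUl pbar vl σh b' ≤ eUl pbar vl σh b) ∧
  (∀ b ≤ pbar, 0 < σh b → ∀ b' ≤ pbar, eUh pbar vh σl b' ≤ eUh pbar vh σl b)

/-- Expected payoff of the low-valuation agent at a mixed profile. -/
noncomputable def piL (pbar vl : ℕ) (σl σh : ℕ → ℝ) : ℝ :=
  ∑ b ∈ Finset.range (pbar + 1), σl b * eUl pbar vl σh b

/-- Expected payoff of the high-valuation agent at a mixed profile. -/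
noncomputable def piH (pbar vh : ℕ) (σl σh : ℕ → ℝ) : ℝ :=
  ∑ b ∈ Finset.range (pbar + 1), σh b * eUh pbar vh σl b

/-- Weak payoff monotonicity for the low-valuation agent. -/
def WPMl (pbar vl : ℕ) (σl σh : ℕ → ℝ) : Prop :=
  ∀ a ≤ pbar, ∀ b ≤ pbar, σl b < σl a → eUl pbar vl σh b < eUl pbar vl σh a

/-- Weak payoff monotonicity for the high-valuation agent. -/
def WPMh (pbar vh : ℕ) (σl σh : ℕ → ℝ) : Prop :=
  ∀ a ≤ pbar, ∀ b ≤ pbar, σh b < σh a → eUh pbar vh σl b < eUh pbar vh σl a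

/-- Expected bid under a mixed strategy. -/
noncomputable def Ebid (pbar : ℕ) (σ : ℕ → ℝ) : ℝ :=
  ∑ b ∈ Finset.range (pbar + 1), σ b * b

/-!
Let `m` be the lowest bid of the high-valuation agent. A low bid `c + 1 > max cl m` is beaten by
`c`: it saves one unit against every high bid `≤ c`, which occur with positive probability. If
`m < cl`, the low agent would rather outbid `m` than bid at most `m`, so all her bids lie in
`(m, cl]`; but then the high agent prefers bidding `cl` (always winning, `2 ch - cl > cl`) to `m`.
Hence `cl ≤ m` and the low agent bids at most `m`. The high agent can then profitably lower `m`
to `m - 1` unless `m ≤ ch` and `m` is a bid of the low agent as well.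
-/

section Payoffs

variable {v b r : ℕ}

lemma UlWB_of_lt (h : r < b) : UlWB v b r = v - b := if_pos h

lemma UlWB_of_le (h : b ≤ r) : UlWB v b r = r := if_neg (not_lt.2 h)

lemma UhWB_of_le (h : r ≤ b) : UhWB v b r = v - b := if_pos h

lemma UhWB_of_lt (h : b < r) : UhWB v b r = r := if_neg (not_le.2 h)

lemma UlWB_succ_lt (hr : r ≤ b) (hv : v ≤ 2 * b) : UlWB v (b + 1) r < UlWB v b r := by
  have hv' : (v : ℝ) ≤ 2 * b := by exact_mod_cast hv
  rw [UlWB_of_lt (Nat.lt_succ_of_le hr)]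
  rcases hr.lt_or_eq with hr | rfl
  · rw [UlWB_of_lt hr]; push_cast; linarith
  · rw [UlWB_of_le le_rfl]; push_cast; linarith

lemma UlWB_succ_le (hv : v ≤ 2 * b) : UlWB v (b + 1) r ≤ UlWB v b r := by
  rcases le_or_gt r b with hr | hr
  · exact (UlWB_succ_lt hr hv).le
  · rw [UlWB_of_le hr, UlWB_of_le hr.le]

lemma UhWB_succ_lt_of_le (hr : r ≤ b) : UhWB v (b + 1) r < UhWB v b r := by
  rw [UhWB_of_le hr, UhWB_of_le (hr.trans b.le_succ)]; push_cast; linarith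

lemma UhWB_succ_lt (hr : r ≤ b + 1) (hv : v ≤ 2 * b + 1) : UhWB v (b + 1) r < UhWB v b r := by
  rcases hr.lt_or_eq with hr | rfl
  · exact UhWB_succ_lt_of_le (Nat.le_of_lt_succ hr)
  · have hv' : (v : ℝ) ≤ 2 * b + 1 := by exact_mod_cast hv
    rw [UhWB_of_le le_rfl, UhWB_of_lt (lt_add_one b)]; push_cast; linarith

end Payoffs

namespace IsMixed

variable {pbar : ℕ} {σ : ℕ → ℝ}

lemma le_of_pos (hσ : IsMixed pbar σ) {b : ℕ} (hb : 0 < σ b) : b ≤ pbar :=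
  not_lt.1 fun h => hb.ne' (hσ.2.1 b h)

lemma exists_pos (hσ : IsMixed pbar σ) : ∃ b, 0 < σ b := by
  obtain ⟨b, -, hb⟩ := exists_lt_of_sum_lt (s := range (pbar + 1)) (f := 0) (g := σ)
    (by rw [hσ.2.2]; simp)
  exact ⟨b, hb⟩

lemma sum_mul_lt_sum_mul (hσ : IsMixed pbar σ) {f g : ℕ → ℝ}
    (hle : ∀ r, 0 < σ r → f r ≤ g r) (hlt : ∃ r, 0 < σ r ∧ f r < g r) :
    ∑ r ∈ range (pbar + 1), σ r * f r < ∑ r ∈ range (pbar + 1), σ r * g r := by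
  obtain ⟨r₀, hσr₀, hr₀⟩ := hlt
  refine sum_lt_sum (fun r _ => ?_) ⟨r₀, mem_range.2 (Nat.lt_succ_of_le (hσ.le_of_pos hσr₀)),
    mul_lt_mul_of_pos_left hr₀ hσr₀⟩
  rcases (hσ.1 r).eq_or_lt with h0 | hpos
  · simp [← h0]
  · exact mul_le_mul_of_nonneg_left (hle r hpos) hpos.le

lemma sum_mul_lt_sum_mul_of_forall (hσ : IsMixed pbar σ) {f g : ℕ → ℝ}
    (hlt : ∀ r, 0 < σ r → f r < g r) :
    ∑ r ∈ range (pbar + 1), σ r * f r < ∑ r ∈ range (pbar + 1), σ r * g r :=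
  let ⟨r, hr⟩ := hσ.exists_pos
  hσ.sum_mul_lt_sum_mul (fun r hr => (hlt r hr).le) ⟨r, hr, hlt r hr⟩

end IsMixed

namespace IsNashWB

variable {pbar vl vh cl ch m : ℕ} {σl σh : ℕ → ℝ}

lemma eUl_le (hN : IsNashWB pbar vl vh σl σh) {b b' : ℕ} (hb : 0 < σl b) (hb' : b' ≤ pbar) :
    eUl pbar vl σh b' ≤ eUl pbar vl σh b :=
  hN.2.2.1 b (hN.1.le_of_pos hb) hb b' hb'

lemma eUh_le (hN : IsNashWB pbar vl vh σl σh) {b b' : ℕ} (hb : 0 < σh b) (hb' : b' ≤ pbar) :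
    eUh pbar vh σl b' ≤ eUh pbar vh σl b :=
  hN.2.2.2 b (hN.2.1.le_of_pos hb) hb b' hb'

lemma low_bid_le_max (hN : IsNashWB pbar (2 * cl) vh σl σh) (hm : 0 < σh m) {b : ℕ}
    (hb : 0 < σl b) : b ≤ max cl m := by
  by_contra! h
  obtain ⟨c, rfl⟩ : ∃ c, b = c + 1 := ⟨b - 1, by omega⟩
  have hdev : eUl pbar (2 * cl) σh (c + 1) < eUl pbar (2 * cl) σh c :=
    hN.2.1.sum_mul_lt_sum_mul (fun r _ => UlWB_succ_le (by omega))
      ⟨m, hm, UlWB_succ_lt (by omega) (by omega)⟩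
  exact hdev.not_ge (hN.eUl_le hb (by have := hN.1.le_of_pos hb; omega))

lemma cl_le_min_high_bid (hN : IsNashWB pbar (2 * cl) (2 * ch) σl σh) (hclch : cl < ch)
    (hpbar : cl ≤ pbar) (hm : 0 < σh m) (hmin : ∀ r, 0 < σh r → m ≤ r) : cl ≤ m := by
  by_contra! hmcl
  have hcl : (m : ℝ) + 1 ≤ cl := by exact_mod_cast hmcl
  -- Against bids `≥ m`, bidding `≤ m` always loses, while `m + 1` also wins against `m`.
  have hlow_gt : ∀ b, 0 < σl b → m < b := by
    intro b hb
    by_contra! hbm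
    have hdev : eUl pbar (2 * cl) σh b < eUl pbar (2 * cl) σh (m + 1) := by
      refine hN.2.1.sum_mul_lt_sum_mul (fun r hr => ?_) ⟨m, hm, ?_⟩
      · rw [UlWB_of_le (hbm.trans (hmin r hr))]
        rcases (hmin r hr).lt_or_eq with hmr | rfl
        · rw [UlWB_of_le hmr]
        · rw [UlWB_of_lt (lt_add_one _)]; push_cast; linarith
      · rw [UlWB_of_le hbm, UlWB_of_lt (lt_add_one _)]; push_cast; linarith
    exact hdev.not_ge (hN.eUl_le hb (by omega))
  have hdev : eUh pbar (2 * ch) σl m < eUh pbar (2 * ch) σl cl := by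
    refine hN.1.sum_mul_lt_sum_mul_of_forall fun r hr => ?_
    have hrcl : r ≤ cl := (hN.low_bid_le_max hm hr).trans (max_eq_left hmcl.le).le
    have hch : (cl : ℝ) < ch := by exact_mod_cast hclch
    rw [UhWB_of_lt (hlow_gt r hr), UhWB_of_le hrcl]
    have : (r : ℝ) ≤ cl := by exact_mod_cast hrcl
    push_cast; linarith
  exact hdev.not_ge (hN.eUh_le hm hpbar)

lemma min_high_bid_le (hN : IsNashWB pbar vl (2 * ch) σl σh) (hm : 0 < σh m)
    (hlow : ∀ b, 0 < σl b → b ≤ m) : m ≤ ch := by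
  by_contra! h
  obtain ⟨c, rfl⟩ : ∃ c, m = c + 1 := ⟨m - 1, by omega⟩
  have hdev : eUh pbar (2 * ch) σl (c + 1) < eUh pbar (2 * ch) σl c :=
    hN.1.sum_mul_lt_sum_mul_of_forall fun r hr => UhWB_succ_lt (hlow r hr) (by omega)
  exact hdev.not_ge (hN.eUh_le hm (by have := hN.2.1.le_of_pos hm; omega))

lemma pos_low_bid_of_min_high_bid (hN : IsNashWB pbar vl vh σl σh) (hm : 0 < σh m)
    (hm0 : m ≠ 0) (hlow : ∀ b, 0 < σl b → b ≤ m) : 0 < σl m := by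
  by_contra! h
  obtain ⟨c, rfl⟩ : ∃ c, m = c + 1 := ⟨m - 1, by omega⟩
  have hdev : eUh pbar vh σl (c + 1) < eUh pbar vh σl c := by
    refine hN.1.sum_mul_lt_sum_mul_of_forall fun r hr => UhWB_succ_lt_of_le ?_
    have hne : r ≠ c + 1 := by rintro rfl; exact hr.not_ge h
    have := hlow r hr
    omega
  exact hdev.not_ge (hN.eUh_le hm (by have := hN.2.1.le_of_pos hm; omega))

end IsNashWB

/-- In the winner-bid auction (valuations `vl = 2*cl < vh = 2*ch`, even positive; ties to the
high-valuation agent; bids in `{0,...,pbar}` with `pbar ≥ vh/2`), every Nash equilibrium has a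
bid `p` in the Nash range `{cl,...,ch}` lying in both supports, with `σl` supported in
`{0,...,p}` and `σh` supported in `{p,...,pbar}`. -/
theorem stmt0 (pbar vl vh cl ch : ℕ) (hvl : vl = 2 * cl) (hvh : vh = 2 * ch)
    (hcl : 0 < cl) (hclch : cl < ch) (hpbar : ch ≤ pbar)
    (σl σh : ℕ → ℝ) (hNash : IsNashWB pbar vl vh σl σh) :
    ∃ p, cl ≤ p ∧ p ≤ ch ∧ 0 < σl p ∧ 0 < σh p ∧
      (∀ b, 0 < σl b → b ≤ p) ∧ (∀ b, 0 < σh b → p ≤ b) := by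
  subst hvl hvh
  have hex := hNash.2.1.exists_pos
  have hm : 0 < σh (Nat.find hex) := Nat.find_spec hex
  have hmin : ∀ r, 0 < σh r → Nat.find hex ≤ r := fun r hr => Nat.find_min' hex hr
  have hclm : cl ≤ Nat.find hex := hNash.cl_le_min_high_bid hclch (by omega) hm hmin
  have hlow : ∀ b, 0 < σl b → b ≤ Nat.find hex := fun b hb =>
    (hNash.low_bid_le_max hm hb).trans (max_eq_right hclm).le
  exact ⟨Nat.find hex, hclm, hNash.min_high_bid_le hm hlow,
    hNash.pos_low_bid_of_min_high_bid hm (by omega) hlow, hm, hlow, hmin⟩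
end

section
/- In the loser-bid auction with valuations v_l < v_h, tie-breaker favoring the high-valuation agent, the set of Nash equilibrium payoff vectors equals {(c_l + t, c_h + (ES − t)) : t = 0, 1, ..., ES}, where c_l = v_l/2, c_h = v_h/2 and ES = c_h − c_l; in particular the winner-bid and loser-bid auctions have identical sets of Nash equilibrium payoffs. -/
open Finset Filter

/-- Payoff to the low-valuation agent in the loser-bid auction. -/
noncomputable def UlLB (vl : ℕ) (b r : ℕ) : ℝ := if r < b then (vl : ℝ) - r else (b : ℝ)

/-- Payoff to the high-valuation agent in the loser-bid auction. -/
noncomputable def UhLB (vh : ℕ) (b r : ℕ) : ℝ := if r ≤ b then (vh : ℝ) - r else (b : ℝ)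

noncomputable def eUlLB (pbar vl : ℕ) (σh : ℕ → ℝ) (b : ℕ) : ℝ :=
  ∑ r ∈ Finset.range (pbar + 1), σh r * UlLB vl b r

noncomputable def eUhLB (pbar vh : ℕ) (σl : ℕ → ℝ) (b : ℕ) : ℝ :=
  ∑ r ∈ Finset.range (pbar + 1), σl r * UhLB vh b r

def IsNashLB (pbar vl vh : ℕ) (σl σh : ℕ → ℝ) : Prop :=
  IsMixed pbar σl ∧ IsMixed pbar σh ∧
  (∀ b ≤ pbar, 0 < σl b → ∀ b' ≤ pbar, eUlLB pbar vl σh b' ≤ eUlLB pbar vl σh b) ∧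
  (∀ b ≤ pbar, 0 < σh b → ∀ b' ≤ pbar, eUhLB pbar vh σl b' ≤ eUhLB pbar vh σl b)

noncomputable def piLLB (pbar vl : ℕ) (σl σh : ℕ → ℝ) : ℝ :=
  ∑ b ∈ Finset.range (pbar + 1), σl b * eUlLB pbar vl σh b

noncomputable def piHLB (pbar vh : ℕ) (σl σh : ℕ → ℝ) : ℝ :=
  ∑ b ∈ Finset.range (pbar + 1), σh b * eUhLB pbar vh σl b

/-! ### Auxiliary infrastructure -/

noncomputable def suppF (pbar : ℕ) (σ : ℕ → ℝ) : Finset ℕ :=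
  (Finset.range (pbar+1)).filter (fun b => 0 < σ b)

lemma mem_suppF {pbar : ℕ} {σ : ℕ → ℝ} {b : ℕ} :
    b ∈ suppF pbar σ ↔ b ≤ pbar ∧ 0 < σ b := by
  simp [suppF, Nat.lt_succ_iff]

lemma suppF_nonempty {pbar : ℕ} {σ : ℕ → ℝ} (h : IsMixed pbar σ) :
    (suppF pbar σ).Nonempty := by
  by_contra hne
  rw [Finset.not_nonempty_iff_eq_empty] at hne
  have h0 : ∀ b ∈ Finset.range (pbar+1), σ b ≤ 0 := by
    intro b hb
    by_contra hb'
    have hbmem : b ∈ suppF pbar σ := by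
      rw [mem_suppF]
      exact ⟨Nat.lt_succ_iff.mp (Finset.mem_range.mp hb), lt_of_not_ge hb'⟩
    rw [hne] at hbmem
    exact absurd hbmem (Finset.notMem_empty b)
  have hs := Finset.sum_nonpos h0
  rw [h.2.2] at hs; linarith

lemma sum_suppF {pbar : ℕ} {σ : ℕ → ℝ} (h : IsMixed pbar σ) (f : ℕ → ℝ) :
    ∑ r ∈ Finset.range (pbar+1), σ r * f r = ∑ r ∈ suppF pbar σ, σ r * f r := by
  refine (Finset.sum_filter_of_ne ?_).symm
  intro x _ hx
  exact lt_of_le_of_ne (h.1 x) (fun he => hx (by rw [← he, zero_mul]))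

lemma sum_suppF_one {pbar : ℕ} {σ : ℕ → ℝ} (h : IsMixed pbar σ) :
    ∑ r ∈ suppF pbar σ, σ r = 1 := by
  rw [← h.2.2]
  refine Finset.sum_filter_of_ne ?_
  intro x _ hx
  exact lt_of_le_of_ne (h.1 x) (Ne.symm hx)

lemma sum_suppF_const {pbar : ℕ} {σ : ℕ → ℝ} (h : IsMixed pbar σ) (c : ℝ) :
    ∑ r ∈ suppF pbar σ, σ r * c = c := by
  rw [← Finset.sum_mul, sum_suppF_one h, one_mul]

lemma cmp_sum {s : Finset ℕ} {σ f g : ℕ → ℝ}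
    (h : ∑ r ∈ s, σ r * f r ≤ ∑ r ∈ s, σ r * g r) :
    0 ≤ ∑ r ∈ s, σ r * (g r - f r) := by
  simp only [mul_sub, Finset.sum_sub_distrib]
  linarith

lemma sum_single_term {s : Finset ℕ} (σ d : ℕ → ℝ) {r0 : ℕ} (h0 : r0 ∈ s)
    (hz : ∀ r ∈ s, r ≠ r0 → d r = 0) :
    ∑ r ∈ s, σ r * d r = σ r0 * d r0 :=
  Finset.sum_eq_single_of_mem r0 h0 (fun r hr hne => by rw [hz r hr hne, mul_zero])

lemma sum_neg_term {s : Finset ℕ} {σ d : ℕ → ℝ} (hσ : ∀ r ∈ s, 0 ≤ σ r)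
    (hd : ∀ r ∈ s, d r ≤ 0) {r0 : ℕ} (h0 : r0 ∈ s) (hp : 0 < σ r0) (hdn : d r0 < 0) :
    ∑ r ∈ s, σ r * d r < 0 := by
  have := Finset.sum_lt_sum (f := fun r => σ r * d r) (g := fun _ => (0:ℝ))
    (fun i hi => mul_nonpos_of_nonneg_of_nonpos (hσ i hi) (hd i hi))
    ⟨r0, h0, mul_neg_of_pos_of_neg hp hdn⟩
  simpa using this

lemma sum_le_const {s : Finset ℕ} {σ d : ℕ → ℝ} (hσ : ∀ r ∈ s, 0 ≤ σ r)
    (h1 : ∑ r ∈ s, σ r = 1) {c : ℝ} (hd : ∀ r ∈ s, d r ≤ c) :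
    ∑ r ∈ s, σ r * d r ≤ c := by
  calc ∑ r ∈ s, σ r * d r ≤ ∑ r ∈ s, σ r * c :=
        Finset.sum_le_sum (fun i hi => mul_le_mul_of_nonneg_left (hd i hi) (hσ i hi))
    _ = c := by rw [← Finset.sum_mul, h1, one_mul]

lemma nonneg_of_mul {a b : ℝ} (ha : 0 < a) (h : 0 ≤ a * b) : 0 ≤ b := by
  nlinarith

noncomputable def deltaS (p : ℕ) : ℕ → ℝ := fun b => if b = p then 1 else 0

lemma deltaS_mixed {pbar p : ℕ} (hp : p ≤ pbar) : IsMixed pbar (deltaS p) := by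
  refine ⟨fun b => ?_, fun b hb => ?_, ?_⟩
  · unfold deltaS; split <;> norm_num
  · unfold deltaS; rw [if_neg]; omega
  · simp [deltaS, Finset.sum_ite_eq', Finset.mem_range, Nat.lt_succ_iff, hp]

lemma sum_deltaS {pbar p : ℕ} (hp : p ≤ pbar) (f : ℕ → ℝ) :
    ∑ r ∈ Finset.range (pbar+1), deltaS p r * f r = f p := by
  simp [deltaS, ite_mul, Finset.sum_ite_eq', Finset.mem_range, Nat.lt_succ_iff, hp]

/-! ### Existence of pure equilibria -/

lemma LB_exists (pbar vl vh cl ch : ℕ) (hvl : vl = 2 * cl) (hvh : vh = 2 * ch)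
    (hcl : 0 < cl) (hclch : cl < ch) (hpbar : ch ≤ pbar) (t : ℕ) (ht : t ≤ ch - cl) :
    ∃ σl σh, IsNashLB pbar vl vh σl σh ∧
      piLLB pbar vl σl σh = ((cl + t : ℕ) : ℝ) ∧
      piHLB pbar vh σl σh = ((ch + ((ch - cl) - t) : ℕ) : ℝ) := by
  set p := cl + t with hpdef
  have hpch : p ≤ ch := by omega
  have hp : p ≤ pbar := le_trans hpch hpbar
  have hM := deltaS_mixed (pbar := pbar) (p := p) hp
  have heUl : ∀ b, eUlLB pbar vl (deltaS p) b = UlLB vl b p := fun b => sum_deltaS hp _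
  have heUh : ∀ b, eUhLB pbar vh (deltaS p) b = UhLB vh b p := fun b => sum_deltaS hp _
  refine ⟨deltaS p, deltaS p, ⟨hM, hM, ?_, ?_⟩, ?_, ?_⟩
  · intro b hb hpos b' hb'
    have hbp : b = p := by
      by_contra hne; simp [deltaS, hne] at hpos
    subst hbp
    rw [heUl, heUl]
    unfold UlLB
    rw [if_neg (lt_irrefl p)]
    split
    · -- p < b', l wins paying p : vl - p ≤ p
      have h2 : (vl : ℝ) ≤ 2 * p := by exact_mod_cast (by omega : vl ≤ 2 * p)
      push_cast; linarith
    · -- b' ≤ p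
      next h =>
      have : b' ≤ p := by omega
      exact_mod_cast this
  · intro b hb hpos b' hb'
    have hbp : b = p := by
      by_contra hne; simp [deltaS, hne] at hpos
    subst hbp
    rw [heUh, heUh]
    unfold UhLB
    rw [if_pos (le_refl p)]
    split
    · exact le_refl _
    · next h =>
      have h2 : (b' : ℝ) + p ≤ vh := by exact_mod_cast (by omega : b' + p ≤ vh)
      linarith
  · unfold piLLB
    rw [sum_deltaS hp, heUl]
    unfold UlLB
    rw [if_neg (lt_irrefl p)]
  · unfold piHLB
    rw [sum_deltaS hp, heUh]
    unfold UhLB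
    rw [if_pos (le_refl p)]
    have hk : (ch + ((ch - cl) - t)) + p = vh := by omega
    have hk2 : ((ch + ((ch - cl) - t) : ℕ) : ℝ) + (p : ℝ) = (vh : ℝ) := by
      exact_mod_cast hk
    linarith

lemma WB_exists (pbar vl vh cl ch : ℕ) (hvl : vl = 2 * cl) (hvh : vh = 2 * ch)
    (hcl : 0 < cl) (hclch : cl < ch) (hpbar : ch ≤ pbar) (t : ℕ) (ht : t ≤ ch - cl) :
    ∃ σl σh, IsNashWB pbar vl vh σl σh ∧
      piL pbar vl σl σh = ((cl + t : ℕ) : ℝ) ∧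
      piH pbar vh σl σh = ((ch + ((ch - cl) - t) : ℕ) : ℝ) := by
  set p := cl + t with hpdef
  have hpch : p ≤ ch := by omega
  have hp : p ≤ pbar := le_trans hpch hpbar
  have hM := deltaS_mixed (pbar := pbar) (p := p) hp
  have heUl : ∀ b, eUl pbar vl (deltaS p) b = UlWB vl b p := fun b => sum_deltaS hp _
  have heUh : ∀ b, eUh pbar vh (deltaS p) b = UhWB vh b p := fun b => sum_deltaS hp _
  refine ⟨deltaS p, deltaS p, ⟨hM, hM, ?_, ?_⟩, ?_, ?_⟩
  · intro b hb hpos b' hb'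
    have hbp : b = p := by
      by_contra hne; simp [deltaS, hne] at hpos
    subst hbp
    rw [heUl, heUl]
    unfold UlWB
    rw [if_neg (lt_irrefl p)]
    split
    · -- p < b' : payoff vl - b' ≤ p
      next h =>
      have h2 : (vl : ℝ) ≤ (p : ℝ) + b' := by exact_mod_cast (by omega : vl ≤ p + b')
      linarith
    · exact le_refl _
  · intro b hb hpos b' hb'
    have hbp : b = p := by
      by_contra hne; simp [deltaS, hne] at hpos
    subst hbp
    rw [heUh, heUh]
    unfold UhWB
    rw [if_pos (le_refl p)]
    split
    · -- p ≤ b' : vh - b' ≤ vh - p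
      next h =>
      have : (p : ℝ) ≤ b' := by exact_mod_cast h
      linarith
    · next h =>
      have h2 : (p : ℝ) + p ≤ vh := by exact_mod_cast (by omega : p + p ≤ vh)
      linarith
  · unfold piL
    rw [sum_deltaS hp, heUl]
    unfold UlWB
    rw [if_neg (lt_irrefl p)]
  · unfold piH
    rw [sum_deltaS hp, heUh]
    unfold UhWB
    rw [if_pos (le_refl p)]
    have hk : (ch + ((ch - cl) - t)) + p = vh := by omega
    have hk2 : ((ch + ((ch - cl) - t) : ℕ) : ℝ) + (p : ℝ) = (vh : ℝ) := by
      exact_mod_cast hk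
    linarith

/-! ### Characterization: every Nash equilibrium of LB has payoffs (a, vh - a), a ∈ [cl, ch] -/

lemma LB_forward (pbar vl vh cl ch : ℕ) (hvl : vl = 2 * cl) (hvh : vh = 2 * ch)
    (hcl : 0 < cl) (hclch : cl < ch) (hpbar : ch ≤ pbar) (σl σh : ℕ → ℝ)
    (hN : IsNashLB pbar vl vh σl σh) :
    ∃ t : ℕ, t ≤ ch - cl ∧ piLLB pbar vl σl σh = ((cl + t : ℕ) : ℝ) ∧
      piHLB pbar vh σl σh = ((ch + ((ch - cl) - t) : ℕ) : ℝ) := by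
  obtain ⟨Ml, Mh, BRl, BRh⟩ := hN
  have hSl := suppF_nonempty Ml
  have hSh := suppF_nonempty Mh
  set Sl := suppF pbar σl with hSldef
  set Sh := suppF pbar σh with hShdef
  set q := Sl.max' hSl with hqdef
  set p := Sh.max' hSh with hpdef
  set m := Sh.min' hSh with hmdef
  have hqS : q ∈ Sl := Finset.max'_mem _ _
  have hpS : p ∈ Sh := Finset.max'_mem _ _
  have hmS : m ∈ Sh := Finset.min'_mem _ _
  have hqmax : ∀ r ∈ Sl, r ≤ q := fun r hr => Finset.le_max' _ r hr
  have hpmax : ∀ r ∈ Sh, r ≤ p := fun r hr => Finset.le_max' _ r hr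
  have hmmin : ∀ r ∈ Sh, m ≤ r := fun r hr => Finset.min'_le _ r hr
  have hqpb : q ≤ pbar := (mem_suppF.mp hqS).1
  have hppb : p ≤ pbar := (mem_suppF.mp hpS).1
  have hmpb : m ≤ pbar := (mem_suppF.mp hmS).1
  have hσlq : 0 < σl q := (mem_suppF.mp hqS).2
  have hσhp : 0 < σh p := (mem_suppF.mp hpS).2
  have hσhm : 0 < σh m := (mem_suppF.mp hmS).2
  have elE : ∀ b, eUlLB pbar vl σh b = ∑ r ∈ Sh, σh r * UlLB vl b r := by
    intro b; unfold eUlLB; rw [sum_suppF Mh]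
  have ehE : ∀ b, eUhLB pbar vh σl b = ∑ r ∈ Sl, σl r * UhLB vh b r := by
    intro b; unfold eUhLB; rw [sum_suppF Ml]
  have cmpL : ∀ b ∈ Sl, ∀ b', b' ≤ pbar →
      0 ≤ ∑ r ∈ Sh, σh r * (UlLB vl b r - UlLB vl b' r) := by
    intro b hb b' hb'
    have h1 := BRl b (mem_suppF.mp hb).1 (mem_suppF.mp hb).2 b' hb'
    rw [elE, elE] at h1
    exact cmp_sum h1
  have cmpH : ∀ b ∈ Sh, ∀ b', b' ≤ pbar →
      0 ≤ ∑ r ∈ Sl, σl r * (UhLB vh b r - UhLB vh b' r) := by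
    intro b hb b' hb'
    have h1 := BRh b (mem_suppF.mp hb).1 (mem_suppF.mp hb).2 b' hb'
    rw [ehE, ehE] at h1
    exact cmp_sum h1
  -- Step 1 : q ≤ p
  have step1 : q ≤ p := by
    by_contra hqp'
    push_neg at hqp'
    -- (a) p ≤ cl
    have ha := cmpL q hqS p hppb
    have hz : ∀ r ∈ Sh, r ≠ p → UlLB vl q r - UlLB vl p r = 0 := by
      intro r hr hne
      have hrp : r < p := lt_of_le_of_ne (hpmax r hr) hne
      unfold UlLB
      rw [if_pos (lt_trans hrp hqp'), if_pos hrp]; ring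
    rw [sum_single_term σh _ hpS hz] at ha
    have ha2 := nonneg_of_mul hσhp ha
    unfold UlLB at ha2
    rw [if_pos hqp', if_neg (lt_irrefl p)] at ha2
    have hpcl : p ≤ cl := by
      have h3 : (p:ℝ) + p ≤ vl := by linarith
      have h4 : p + p ≤ vl := by exact_mod_cast h3
      omega
    -- (b) the lowest l-bid above p is p+1
    have hqT : q ∈ Sl.filter (fun r => p < r) := Finset.mem_filter.mpr ⟨hqS, hqp'⟩
    have hTne : (Sl.filter (fun r => p < r)).Nonempty := ⟨q, hqT⟩
    set rh := (Sl.filter (fun r => p < r)).min' hTne with hrhdef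
    have hrhT : rh ∈ Sl.filter (fun r => p < r) := Finset.min'_mem _ hTne
    have hrhS : rh ∈ Sl := (Finset.mem_filter.mp hrhT).1
    have hrhp : p < rh := (Finset.mem_filter.mp hrhT).2
    have hrhmin : ∀ r ∈ Sl, p < r → rh ≤ r := fun r hr hpr =>
      Finset.min'_le _ r (Finset.mem_filter.mpr ⟨hr, hpr⟩)
    have hrhpb : rh ≤ pbar := (mem_suppF.mp hrhS).1
    have hrh1 : rh = p + 1 := by
      by_contra hne
      obtain ⟨s, hs⟩ : ∃ s, rh = s + 1 := ⟨rh - 1, by omega⟩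
      have hsp : p + 1 ≤ s := by omega
      have hspb : s ≤ pbar := by omega
      have hc := cmpH p hpS s hspb
      have hneg : ∑ r ∈ Sl, σl r * (UhLB vh p r - UhLB vh s r) < 0 := by
        refine sum_neg_term (fun r _ => Ml.1 r) ?_ hqS hσlq ?_
        · intro r hr
          unfold UhLB
          rcases le_or_gt r p with h1 | h1
          · rw [if_pos h1, if_pos (by omega : r ≤ s)]; linarith
          · have h2 : rh ≤ r := hrhmin r hr h1
            rw [if_neg (by omega), if_neg (by omega)]
            have : (p:ℝ) ≤ s := by exact_mod_cast (by omega : p ≤ s)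
            linarith
        · unfold UhLB
          have hqrh : rh ≤ q := hrhmin q hqS hqp'
          rw [if_neg (by omega), if_neg (by omega)]
          have : (p:ℝ) < s := by exact_mod_cast (by omega : p < s)
          linarith
      linarith
    have h1S : (p+1) ∈ Sl := hrh1 ▸ hrhS
    have hσl1 : 0 < σl (p+1) := (mem_suppF.mp h1S).2
    -- (c) h strictly gains deviating p → p+1
    have hppb1 : p + 1 ≤ pbar := by omega
    have hc := cmpH p hpS (p+1) hppb1
    have hneg : ∑ r ∈ Sl, σl r * (UhLB vh p r - UhLB vh (p+1) r) < 0 := by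
      refine sum_neg_term (fun r _ => Ml.1 r) ?_ h1S hσl1 ?_
      · intro r hr
        unfold UhLB
        rcases le_or_gt r p with h1 | h1
        · rw [if_pos h1, if_pos (by omega : r ≤ p + 1)]; linarith
        · rcases eq_or_lt_of_le (show p + 1 ≤ r from h1) with h2 | h2
          · rw [if_neg (by omega), if_pos (by omega : r ≤ p + 1)]
            have h3 : (r:ℝ) = p + 1 := by exact_mod_cast congrArg Nat.cast h2.symm
            have h4 : (p:ℝ) + p + 1 ≤ vh := by
              exact_mod_cast (by omega : p + p + 1 ≤ vh)
            linarith
          · rw [if_neg (by omega), if_neg (by omega)]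
            push_cast
            linarith
      · unfold UhLB
        rw [if_neg (by omega), if_pos (le_refl _)]
        have h4 : (p:ℝ) + p + 1 < vh := by
          exact_mod_cast (by omega : p + p + 1 < vh)
        push_cast
        linarith
    linarith
  -- Step 2 : q ≤ ch
  have step2 : q ≤ ch := by
    rcases Nat.eq_zero_or_pos q with h0 | h0
    · omega
    · obtain ⟨q0, hq0⟩ : ∃ q0, q = q0 + 1 := ⟨q - 1, by omega⟩
      have hq0pb : q0 ≤ pbar := by omega
      have hc := cmpH p hpS q0 hq0pb
      have hz : ∀ r ∈ Sl, r ≠ q → UhLB vh p r - UhLB vh q0 r = 0 := by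
        intro r hr hne
        have hrq : r ≤ q0 := by have := hqmax r hr; omega
        unfold UhLB
        rw [if_pos (by have := hqmax r hr; omega : r ≤ p), if_pos hrq]; ring
      rw [sum_single_term σl _ hqS hz] at hc
      have h2 := nonneg_of_mul hσlq hc
      unfold UhLB at h2
      rw [if_pos step1, if_neg (by omega : ¬ q ≤ q0)] at h2
      have h3 : (q:ℝ) + q0 ≤ vh := by linarith
      have h4 : q + q0 ≤ vh := by exact_mod_cast h3
      omega
  -- Step 3 : q ≤ m
  have step3 : q ≤ m := by
    by_contra hmq'
    push_neg at hmq'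
    have hqT : q ∈ Sl.filter (fun r => m < r) := Finset.mem_filter.mpr ⟨hqS, hmq'⟩
    have hTne : (Sl.filter (fun r => m < r)).Nonempty := ⟨q, hqT⟩
    set rh := (Sl.filter (fun r => m < r)).min' hTne with hrhdef
    have hrhT : rh ∈ Sl.filter (fun r => m < r) := Finset.min'_mem _ hTne
    have hrhS : rh ∈ Sl := (Finset.mem_filter.mp hrhT).1
    have hrhp : m < rh := (Finset.mem_filter.mp hrhT).2
    have hrhmin : ∀ r ∈ Sl, m < r → rh ≤ r := fun r hr hpr =>
      Finset.min'_le _ r (Finset.mem_filter.mpr ⟨hr, hpr⟩)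
    have hrhpb : rh ≤ pbar := (mem_suppF.mp hrhS).1
    have hrh1 : rh = m + 1 := by
      by_contra hne
      obtain ⟨s, hs⟩ : ∃ s, rh = s + 1 := ⟨rh - 1, by omega⟩
      have hsp : m + 1 ≤ s := by omega
      have hspb : s ≤ pbar := by omega
      have hc := cmpH m hmS s hspb
      have hneg : ∑ r ∈ Sl, σl r * (UhLB vh m r - UhLB vh s r) < 0 := by
        refine sum_neg_term (fun r _ => Ml.1 r) ?_ hqS hσlq ?_
        · intro r hr
          unfold UhLB
          rcases le_or_gt r m with h1 | h1
          · rw [if_pos h1, if_pos (by omega : r ≤ s)]; linarith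
          · have h2 : rh ≤ r := hrhmin r hr h1
            rw [if_neg (by omega), if_neg (by omega)]
            have : (m:ℝ) ≤ s := by exact_mod_cast (by omega : m ≤ s)
            linarith
        · unfold UhLB
          have hqrh : rh ≤ q := hrhmin q hqS hmq'
          rw [if_neg (by omega), if_neg (by omega)]
          have : (m:ℝ) < s := by exact_mod_cast (by omega : m < s)
          linarith
      linarith
    have h1S : (m+1) ∈ Sl := hrh1 ▸ hrhS
    have hσl1 : 0 < σl (m+1) := (mem_suppF.mp h1S).2
    have hm1ch : m + 1 ≤ ch := by
      have : rh ≤ q := hrhmin q hqS hmq'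
      omega
    have hmpb1 : m + 1 ≤ pbar := by omega
    have hc := cmpH m hmS (m+1) hmpb1
    have hneg : ∑ r ∈ Sl, σl r * (UhLB vh m r - UhLB vh (m+1) r) < 0 := by
      refine sum_neg_term (fun r _ => Ml.1 r) ?_ h1S hσl1 ?_
      · intro r hr
        unfold UhLB
        rcases le_or_gt r m with h1 | h1
        · rw [if_pos h1, if_pos (by omega : r ≤ m + 1)]; linarith
        · rcases eq_or_lt_of_le (show m + 1 ≤ r from h1) with h2 | h2
          · rw [if_neg (by omega), if_pos (by omega : r ≤ m + 1)]
            have h3 : (r:ℝ) = m + 1 := by exact_mod_cast congrArg Nat.cast h2.symm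
            have h4 : (m:ℝ) + m + 1 ≤ vh := by
              exact_mod_cast (by omega : m + m + 1 ≤ vh)
            linarith
          · rw [if_neg (by omega), if_neg (by omega)]
            push_cast
            linarith
      · unfold UhLB
        rw [if_neg (by omega), if_pos (le_refl _)]
        have h4 : (m:ℝ) + m + 1 < vh := by
          exact_mod_cast (by omega : m + m + 1 < vh)
        push_cast
        linarith
    linarith
  -- values: any l-bid weakly below the whole h-support yields itself
  have hval : ∀ b, b ≤ m → eUlLB pbar vl σh b = (b:ℝ) := by
    intro b hb
    rw [elE]
    have hcongr : ∀ r ∈ Sh, σh r * UlLB vl b r = σh r * (b:ℝ) := by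
      intro r hr
      unfold UlLB
      rw [if_neg (by have := hmmin r hr; omega : ¬ r < b)]
    rw [Finset.sum_congr rfl hcongr, sum_suppF_const Mh]
  -- Step 4 : the support of σl is {q}
  have hSlq : ∀ β ∈ Sl, β = q := by
    intro β hβ
    have hβq : β ≤ q := hqmax β hβ
    have hβpb : β ≤ pbar := (mem_suppF.mp hβ).1
    have h1 := BRl q hqpb hσlq β hβpb
    have h2 := BRl β hβpb (mem_suppF.mp hβ).2 q hqpb
    have hβv : eUlLB pbar vl σh β = (β:ℝ) := hval β (le_trans hβq step3)
    have hqv : eUlLB pbar vl σh q = (q:ℝ) := hval q step3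
    rw [hβv, hqv] at h1 h2
    have : (β:ℝ) = q := le_antisymm h1 h2
    exact_mod_cast this
  -- Step 5 : m = q
  have step5 : m = q := by
    have hmlq : m ≤ q := by
      by_contra h
      push_neg at h
      have h1 := BRl q hqpb hσlq m hmpb
      rw [hval m (le_refl m), hval q step3] at h1
      have : m ≤ q := by exact_mod_cast h1
      omega
    omega
  have hqSh : q ∈ Sh := step5 ▸ hmS
  have hσhq : 0 < σh q := (mem_suppF.mp hqSh).2
  -- Step 6 : cl ≤ q
  have step6 : cl ≤ q := by
    rcases le_or_gt ch q with hc | hc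
    · omega
    · by_contra hclq
      push_neg at hclq
      have hq1pb : q + 1 ≤ pbar := by omega
      have hcq := cmpL q hqS (q+1) hq1pb
      have hneg : ∑ r ∈ Sh, σh r * (UlLB vl q r - UlLB vl (q+1) r) < 0 := by
        refine sum_neg_term (fun r _ => Mh.1 r) ?_ hqSh hσhq ?_
        · intro r hr
          have hrq : q ≤ r := step5 ▸ hmmin r hr
          unfold UlLB
          rcases eq_or_lt_of_le hrq with h2 | h2
          · rw [if_neg (by omega), if_pos (by omega : r < q + 1)]
            have h3 : (r:ℝ) = q := by exact_mod_cast h2.symm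
            have h4 : (q:ℝ) + q + 2 ≤ vl := by
              exact_mod_cast (by omega : q + q + 2 ≤ vl)
            linarith
          · rw [if_neg (by omega), if_neg (by omega)]
            push_cast
            linarith
        · unfold UlLB
          rw [if_neg (by omega), if_pos (by omega : q < q + 1)]
          have h4 : (q:ℝ) + q + 2 ≤ vl := by
            exact_mod_cast (by omega : q + q + 2 ≤ vl)
          linarith
      linarith
  -- payoffs
  have hπl : piLLB pbar vl σl σh = (q:ℝ) := by
    unfold piLLB
    rw [sum_suppF Ml]
    have hcongr : ∀ b ∈ Sl, σl b * eUlLB pbar vl σh b = σl b * (q:ℝ) := by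
      intro b hb
      rw [hSlq b hb, hval q step3]
    rw [Finset.sum_congr rfl hcongr, sum_suppF_const Ml]
  have hπh : piHLB pbar vh σl σh = (vh:ℝ) - q := by
    unfold piHLB
    rw [sum_suppF Mh]
    have hcongr : ∀ b ∈ Sh, σh b * eUhLB pbar vh σl b = σh b * ((vh:ℝ) - q) := by
      intro b hb
      have hbv : eUhLB pbar vh σl b = (vh:ℝ) - q := by
        rw [ehE]
        have hcongr2 : ∀ r ∈ Sl, σl r * UhLB vh b r = σl r * ((vh:ℝ) - q) := by
          intro r hr
          rw [hSlq r hr]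
          unfold UhLB
          rw [if_pos (by have := hmmin b hb; omega : q ≤ b)]
        rw [Finset.sum_congr rfl hcongr2, sum_suppF_const Ml]
      rw [hbv]
    rw [Finset.sum_congr rfl hcongr, sum_suppF_const Mh]
  refine ⟨q - cl, by omega, ?_, ?_⟩
  · rw [hπl]
    have : cl + (q - cl) = q := by omega
    rw [this]
  · rw [hπh]
    have hk : (ch + ((ch - cl) - (q - cl))) + q = vh := by omega
    have hk2 : ((ch + ((ch - cl) - (q - cl)) : ℕ) : ℝ) + (q : ℝ) = (vh : ℝ) := by
      exact_mod_cast hk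
    linarith

/-! ### Characterization: every Nash equilibrium of WB has payoffs (p, vh - p), p ∈ [cl, ch] -/

lemma WB_forward (pbar vl vh cl ch : ℕ) (hvl : vl = 2 * cl) (hvh : vh = 2 * ch)
    (hcl : 0 < cl) (hclch : cl < ch) (hpbar : ch ≤ pbar) (σl σh : ℕ → ℝ)
    (hN : IsNashWB pbar vl vh σl σh) :
    ∃ t : ℕ, t ≤ ch - cl ∧ piL pbar vl σl σh = ((cl + t : ℕ) : ℝ) ∧
      piH pbar vh σl σh = ((ch + ((ch - cl) - t) : ℕ) : ℝ) := by
  obtain ⟨Ml, Mh, BRl, BRh⟩ := hN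
  have hSl := suppF_nonempty Ml
  have hSh := suppF_nonempty Mh
  set Sl := suppF pbar σl with hSldef
  set Sh := suppF pbar σh with hShdef
  set q := Sl.max' hSl with hqdef
  set p := Sh.max' hSh with hpdef
  set m := Sh.min' hSh with hmdef
  have hqS : q ∈ Sl := Finset.max'_mem _ _
  have hpS : p ∈ Sh := Finset.max'_mem _ _
  have hmS : m ∈ Sh := Finset.min'_mem _ _
  have hqmax : ∀ r ∈ Sl, r ≤ q := fun r hr => Finset.le_max' _ r hr
  have hpmax : ∀ r ∈ Sh, r ≤ p := fun r hr => Finset.le_max' _ r hr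
  have hmmin : ∀ r ∈ Sh, m ≤ r := fun r hr => Finset.min'_le _ r hr
  have hmp : m ≤ p := hpmax m hmS
  have hqpb : q ≤ pbar := (mem_suppF.mp hqS).1
  have hppb : p ≤ pbar := (mem_suppF.mp hpS).1
  have hmpb : m ≤ pbar := (mem_suppF.mp hmS).1
  have hσlq : 0 < σl q := (mem_suppF.mp hqS).2
  have hσhp : 0 < σh p := (mem_suppF.mp hpS).2
  have hσhm : 0 < σh m := (mem_suppF.mp hmS).2
  have elE : ∀ b, eUl pbar vl σh b = ∑ r ∈ Sh, σh r * UlWB vl b r := by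
    intro b; unfold eUl; rw [sum_suppF Mh]
  have ehE : ∀ b, eUh pbar vh σl b = ∑ r ∈ Sl, σl r * UhWB vh b r := by
    intro b; unfold eUh; rw [sum_suppF Ml]
  have cmpL : ∀ b ∈ Sl, ∀ b', b' ≤ pbar →
      0 ≤ ∑ r ∈ Sh, σh r * (UlWB vl b r - UlWB vl b' r) := by
    intro b hb b' hb'
    have h1 := BRl b (mem_suppF.mp hb).1 (mem_suppF.mp hb).2 b' hb'
    rw [elE, elE] at h1
    exact cmp_sum h1
  have cmpH : ∀ b ∈ Sh, ∀ b', b' ≤ pbar →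
      0 ≤ ∑ r ∈ Sl, σl r * (UhWB vh b r - UhWB vh b' r) := by
    intro b hb b' hb'
    have h1 := BRh b (mem_suppF.mp hb).1 (mem_suppF.mp hb).2 b' hb'
    rw [ehE, ehE] at h1
    exact cmp_sum h1
  -- value of bidding q for agent h : wins against everything
  have hqhv : eUh pbar vh σl q = (vh:ℝ) - q := by
    have hcongr : ∀ r ∈ Sl, σl r * UhWB vh q r = σl r * ((vh:ℝ) - q) := by
      intro r hr; unfold UhWB; rw [if_pos (hqmax r hr)]
    rw [ehE, Finset.sum_congr rfl hcongr, sum_suppF_const Ml]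
  -- Step W1 : q ≤ p
  have step1 : q ≤ p := by
    by_contra hqp'
    push_neg at hqp'
    -- (a) q = p + 1
    have hppb1 : p + 1 ≤ pbar := by omega
    have ha := cmpL q hqS (p+1) hppb1
    have hcongr : ∀ r ∈ Sh, σh r * (UlWB vl q r - UlWB vl (p+1) r)
        = σh r * ((p:ℝ) + 1 - q) := by
      intro r hr
      have hrp := hpmax r hr
      unfold UlWB
      rw [if_pos (by omega : r < q), if_pos (by omega : r < p + 1)]
      push_cast; ring_nf
    rw [Finset.sum_congr rfl hcongr, sum_suppF_const Mh] at ha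
    have hq1 : q = p + 1 := by
      have h2 : (q:ℝ) ≤ p + 1 := by linarith
      have h3 : q ≤ p + 1 := by exact_mod_cast h2
      omega
    -- (b) q ≤ cl
    have hqcl : q ≤ cl := by
      by_contra h
      push_neg at h
      have hb := cmpL q hqS p hppb
      have hneg : ∑ r ∈ Sh, σh r * (UlWB vl q r - UlWB vl p r) < 0 := by
        refine sum_neg_term (fun r _ => Mh.1 r) ?_ hpS hσhp ?_
        · intro r hr
          unfold UlWB
          rcases eq_or_lt_of_le (hpmax r hr) with h2 | h2
          · rw [if_pos (by omega : r < q), if_neg (by omega : ¬ r < p)]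
            have h3 : (vl:ℝ) ≤ q + r := by
              exact_mod_cast (by omega : vl ≤ q + r)
            linarith
          · rw [if_pos (by omega : r < q), if_pos h2]
            have h3 : (p:ℝ) ≤ q := by exact_mod_cast le_of_lt hqp'
            push_cast; linarith
        · unfold UlWB
          rw [if_pos (by omega : p < q), if_neg (lt_irrefl p)]
          have h3 : (vl:ℝ) < q + p := by
            exact_mod_cast (by omega : vl < q + p)
          linarith
      linarith
    -- (c) l has no mass weakly below m
    have hnolow : ∀ β ∈ Sl, ¬ β ≤ m := by
      intro β hβ hβm
      have hβpb : β ≤ pbar := (mem_suppF.mp hβ).1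
      have hσβ : 0 < σl β := (mem_suppF.mp hβ).2
      have hqv : eUl pbar vl σh q = (vl:ℝ) - q := by
        have hcongr2 : ∀ r ∈ Sh, σh r * UlWB vl q r = σh r * ((vl:ℝ) - q) := by
          intro r hr
          unfold UlWB
          rw [if_pos (by have := hpmax r hr; omega : r < q)]
        rw [elE, Finset.sum_congr rfl hcongr2, sum_suppF_const Mh]
      have hβv : eUl pbar vl σh β = ∑ r ∈ Sh, σh r * (r:ℝ) := by
        have hcongr2 : ∀ r ∈ Sh, σh r * UlWB vl β r = σh r * (r:ℝ) := by
          intro r hr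
          unfold UlWB
          rw [if_neg (by have := hmmin r hr; omega : ¬ r < β)]
        rw [elE, Finset.sum_congr rfl hcongr2]
      have hE : ∑ r ∈ Sh, σh r * (r:ℝ) ≤ (p:ℝ) :=
        sum_le_const (fun r _ => Mh.1 r) (sum_suppF_one Mh)
          (fun r hr => by exact_mod_cast hpmax r hr)
      have h2 := BRl β hβpb hσβ q hqpb
      rw [hβv, hqv] at h2
      have h3 : (p:ℝ) + 1 + q ≤ vl := by
        exact_mod_cast (by omega : p + 1 + q ≤ vl)
      linarith
    -- (d) final contradiction : h prefers q over m
    have h1 := BRh m hmpb hσhm q hqpb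
    rw [hqhv] at h1
    have hmhv : eUh pbar vh σl m ≤ (q:ℝ) := by
      rw [ehE]
      refine sum_le_const (fun r _ => Ml.1 r) (sum_suppF_one Ml) ?_
      intro r hr
      unfold UhWB
      rw [if_neg (hnolow r hr)]
      exact_mod_cast hqmax r hr
    have h4 : (vh:ℝ) ≤ q + q := by linarith
    have h5 : vh ≤ q + q := by exact_mod_cast h4
    omega
  -- Step W2 : p = q
  have step2 : p = q := by
    have h1 := cmpH p hpS q hqpb
    have hcongr : ∀ r ∈ Sl, σl r * (UhWB vh p r - UhWB vh q r)
        = σl r * ((q:ℝ) - p) := by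
      intro r hr
      have := hqmax r hr
      unfold UhWB
      rw [if_pos (by omega : r ≤ p), if_pos (by omega : r ≤ q)]
      ring_nf
    rw [Finset.sum_congr rfl hcongr, sum_suppF_const Ml] at h1
    have h2 : (p:ℝ) ≤ q := by linarith
    have h3 : p ≤ q := by exact_mod_cast h2
    omega
  -- Step W3 : q ≤ m
  have step3 : q ≤ m := by
    by_contra hmq'
    push_neg at hmq'
    obtain ⟨q0, hq0⟩ : ∃ q0, q = q0 + 1 := ⟨q - 1, by omega⟩
    have hq0r : (q0:ℝ) + 1 = q := by exact_mod_cast hq0.symm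
    -- (a) q ≤ cl
    have hqcl : q ≤ cl := by
      by_contra h2
      push_neg at h2
      have hc := cmpL q hqS q0 (by omega)
      refine absurd hc (not_le.2 (sum_neg_term (fun r _ => Mh.1 r) ?_ hmS hσhm ?_))
      · intro r hr
        have hrp : r ≤ q := by have := hpmax r hr; omega
        unfold UlWB
        rcases lt_trichotomy r q0 with h3 | h3 | h3
        · rw [if_pos (by omega : r < q), if_pos h3]
          push_cast; linarith
        · rw [if_pos (by omega : r < q), if_neg (by omega : ¬ r < q0)]
          have h4 : (vl:ℝ) ≤ q + r := by
            exact_mod_cast (by omega : vl ≤ q + r)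
          linarith
        · rw [if_neg (by omega : ¬ r < q), if_neg (by omega : ¬ r < q0)]
          linarith
      · unfold UlWB
        rcases Nat.lt_or_ge m q0 with h3 | h3
        · rw [if_pos (by omega : m < q), if_pos h3]
          push_cast; linarith
        · have hmq0 : m = q0 := by omega
          rw [if_pos (by omega : m < q), if_neg (by omega : ¬ m < q0)]
          have h4 : (vl:ℝ) < q + m := by
            exact_mod_cast (by omega : vl < q + m)
          linarith
    -- (b) l has some mass weakly below m
    have hex : ∃ β ∈ Sl, β ≤ m := by
      by_contra h2
      push_neg at h2
      have h1 := BRh m hmpb hσhm q hqpb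
      rw [hqhv] at h1
      have hmhv : eUh pbar vh σl m ≤ (q:ℝ) := by
        rw [ehE]
        refine sum_le_const (fun r _ => Ml.1 r) (sum_suppF_one Ml) ?_
        intro r hr
        unfold UhWB
        rw [if_neg (by have := h2 r hr; omega : ¬ r ≤ m)]
        exact_mod_cast hqmax r hr
      have h4 : (vh:ℝ) ≤ q + q := by linarith
      have h5 : vh ≤ q + q := by exact_mod_cast h4
      omega
    obtain ⟨β, hβS, hβm⟩ := hex
    -- (c) contradiction : bidding q is strictly better than β for agent l
    have hc := cmpL β hβS q hqpb
    refine absurd hc (not_le.2 (sum_neg_term (fun r _ => Mh.1 r) ?_ hmS hσhm ?_))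
    · intro r hr
      have hrm : m ≤ r := hmmin r hr
      have hrq : r ≤ q := by have := hpmax r hr; omega
      unfold UlWB
      rw [if_neg (by omega : ¬ r < β)]
      rcases Nat.lt_or_ge r q with h3 | h3
      · rw [if_pos h3]
        have h4 : (r:ℝ) + q < vl := by
          exact_mod_cast (by omega : r + q < vl)
        linarith
      · rw [if_neg (by omega : ¬ r < q)]
        linarith
    · unfold UlWB
      rw [if_neg (by omega : ¬ m < β), if_pos (by omega : m < q)]
      have h4 : (m:ℝ) + q < vl := by
        exact_mod_cast (by omega : m + q < vl)
      linarith
  -- now the h-support is exactly {q}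
  have hmq : m = q := by omega
  have hqSh : q ∈ Sh := hmq ▸ hmS
  have hσhq : 0 < σh q := (mem_suppF.mp hqSh).2
  have hShq : ∀ b ∈ Sh, b = q := by
    intro b hb
    have := hmmin b hb
    have := hpmax b hb
    omega
  -- value of any bid b ≤ q for agent l : receives q
  have hvalL : ∀ b, b ≤ q → eUl pbar vl σh b = (q:ℝ) := by
    intro b hb
    have hcongr : ∀ r ∈ Sh, σh r * UlWB vl b r = σh r * (q:ℝ) := by
      intro r hr
      have hrq : r = q := hShq r hr
      unfold UlWB
      rw [if_neg (by omega : ¬ r < b), hrq]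
    rw [elE, Finset.sum_congr rfl hcongr, sum_suppF_const Mh]
  -- Step W5 : cl ≤ q
  have step5 : cl ≤ q := by
    rcases le_or_gt ch q with hc | hc
    · omega
    · have h1 := BRl q hqpb hσlq (q+1) (by omega)
      have hq1v : eUl pbar vl σh (q+1) = (vl:ℝ) - (q+1) := by
        have hcongr : ∀ r ∈ Sh, σh r * UlWB vl (q+1) r = σh r * ((vl:ℝ) - (q+1)) := by
          intro r hr
          have hrq : r = q := hShq r hr
          unfold UlWB
          rw [if_pos (by omega : r < q + 1)]
          push_cast; ring_nf
        rw [elE, Finset.sum_congr rfl hcongr, sum_suppF_const Mh]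
      rw [hq1v, hvalL q (le_refl q)] at h1
      have h2 : (vl:ℝ) ≤ 2 * q + 1 := by push_cast at h1 ⊢; linarith
      have h3 : vl ≤ 2 * q + 1 := by exact_mod_cast h2
      omega
  -- Step W6 : q ≤ ch
  have step6 : q ≤ ch := by
    rcases le_or_gt q ch with hc | hc
    · exact hc
    · obtain ⟨q0, hq0⟩ : ∃ q0, q = q0 + 1 := ⟨q - 1, by omega⟩
      have hq0r : (q0:ℝ) + 1 = q := by exact_mod_cast hq0.symm
      have hc2 := cmpH q hqSh q0 (by omega)
      refine absurd hc2 (not_le.2 (sum_neg_term (fun r _ => Ml.1 r) ?_ hqS hσlq ?_)).elim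
      · intro r hr
        have hrq : r ≤ q := hqmax r hr
        unfold UhWB
        rcases Nat.lt_or_ge q0 r with h3 | h3
        · rw [if_pos (by omega : r ≤ q), if_neg (by omega : ¬ r ≤ q0)]
          have h4 : (vh:ℝ) < q + r := by
            exact_mod_cast (by omega : vh < q + r)
          linarith
        · rw [if_pos (by omega : r ≤ q), if_pos h3]
          linarith
      · unfold UhWB
        rw [if_pos (le_refl q), if_neg (by omega : ¬ q ≤ q0)]
        have h4 : (vh:ℝ) < q + q := by
          exact_mod_cast (by omega : vh < q + q)
        linarith
  -- payoffs
  have hπl : piL pbar vl σl σh = (q:ℝ) := by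
    unfold piL
    rw [sum_suppF Ml]
    have hcongr : ∀ b ∈ Sl, σl b * eUl pbar vl σh b = σl b * (q:ℝ) := by
      intro b hb
      rw [hvalL b (hqmax b hb)]
    rw [Finset.sum_congr rfl hcongr, sum_suppF_const Ml]
  have hπh : piH pbar vh σl σh = (vh:ℝ) - q := by
    unfold piH
    rw [sum_suppF Mh]
    have hcongr : ∀ b ∈ Sh, σh b * eUh pbar vh σl b = σh b * ((vh:ℝ) - q) := by
      intro b hb
      rw [hShq b hb, hqhv]
    rw [Finset.sum_congr rfl hcongr, sum_suppF_const Mh]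
  refine ⟨q - cl, by omega, ?_, ?_⟩
  · rw [hπl]
    have : cl + (q - cl) = q := by omega
    rw [this]
  · rw [hπh]
    have hk : (ch + ((ch - cl) - (q - cl))) + q = vh := by omega
    have hk2 : ((ch + ((ch - cl) - (q - cl)) : ℕ) : ℝ) + (q : ℝ) = (vh : ℝ) := by
      exact_mod_cast hk
    linarith

/-- The Nash equilibrium payoff vectors of the loser-bid auction are exactly
`{(cl + t, ch + (ES - t)) : t = 0, ..., ES}`; in particular the winner-bid and loser-bid
auctions have identical sets of Nash equilibrium payoff vectors. -/
theorem stmt2 (pbar vl vh cl ch : ℕ) (hvl : vl = 2 * cl) (hvh : vh = 2 * ch)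
    (hcl : 0 < cl) (hclch : cl < ch) (hpbar : ch ≤ pbar) :
    (∀ x y : ℝ,
      (∃ σl σh, IsNashLB pbar vl vh σl σh ∧
        piLLB pbar vl σl σh = x ∧ piHLB pbar vh σl σh = y) ↔
      (∃ t : ℕ, t ≤ ch - cl ∧ x = ((cl + t : ℕ) : ℝ) ∧
        y = ((ch + ((ch - cl) - t) : ℕ) : ℝ))) ∧
    (∀ x y : ℝ,
      (∃ σl σh, IsNashWB pbar vl vh σl σh ∧
        piL pbar vl σl σh = x ∧ piH pbar vh σl σh = y) ↔
      (∃ σl σh, IsNashLB pbar vl vh σl σh ∧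
        piLLB pbar vl σl σh = x ∧ piHLB pbar vh σl σh = y)) := by
  have hLB : ∀ x y : ℝ,
      (∃ σl σh, IsNashLB pbar vl vh σl σh ∧
        piLLB pbar vl σl σh = x ∧ piHLB pbar vh σl σh = y) ↔
      (∃ t : ℕ, t ≤ ch - cl ∧ x = ((cl + t : ℕ) : ℝ) ∧
        y = ((ch + ((ch - cl) - t) : ℕ) : ℝ)) := by
    intro x y
    constructor
    · rintro ⟨σl, σh, hN, rfl, rfl⟩
      obtain ⟨t, ht, h1, h2⟩ :=
        LB_forward pbar vl vh cl ch hvl hvh hcl hclch hpbar σl σh hN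
      exact ⟨t, ht, h1.symm ▸ rfl, h2.symm ▸ rfl⟩
    · rintro ⟨t, ht, rfl, rfl⟩
      obtain ⟨σl, σh, hN, h1, h2⟩ :=
        LB_exists pbar vl vh cl ch hvl hvh hcl hclch hpbar t ht
      exact ⟨σl, σh, hN, h1, h2⟩
  refine ⟨hLB, ?_⟩
  intro x y
  rw [hLB x y]
  constructor
  · rintro ⟨σl, σh, hN, rfl, rfl⟩
    obtain ⟨t, ht, h1, h2⟩ :=
      WB_forward pbar vl vh cl ch hvl hvh hcl hclch hpbar σl σh hN
    exact ⟨t, ht, h1.symm ▸ rfl, h2.symm ▸ rfl⟩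
  · rintro ⟨t, ht, rfl, rfl⟩
    obtain ⟨σl, σh, hN, h1, h2⟩ :=
      WB_exists pbar vl vh cl ch hvl hvh hcl hclch hpbar t ht
    exact ⟨σl, σh, hN, h1, h2⟩
end

section
/- For every α with 0 < α < 1 and every p with v_l/2 ≤ p ≤ v_h/2, the profile in which both agents bid p with certainty is a strict Nash equilibrium of the α-auction: each agent's bid p is her unique best response to the other agent bidding p. -/
/-
Against an opponent bidding `p`, bidding `p` yields `p` to the low agent (she loses the tie) and
`v_h - p` to the high agent (she wins it). Deviating downwards turns the deviator into a loser who
receives `α p + (1 - α) b < p`, which is at most `v_h - p` as `2p ≤ v_h`. Deviating upwards makes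
the deviator a winner paying `α b + (1 - α) p > p`, so the high agent loses money and the low agent
gets less than `v_l - p ≤ p` as `v_l ≤ 2p`.
-/

open Finset

/-- Payoff to the low-valuation agent in the α-auction when she bids `b` and the
high-valuation agent bids `r` (ties won by the high-valuation agent). -/
noncomputable def UlA (vl : ℕ) (α : ℝ) (b r : ℕ) : ℝ :=
  if r < b then (vl : ℝ) - (α * b + (1 - α) * r) else α * r + (1 - α) * b

/-- Payoff to the high-valuation agent in the α-auction when she bids `b` and the
low-valuation agent bids `r` (ties won by the high-valuation agent). -/
noncomputable def UhA (vh : ℕ) (α : ℝ) (b r : ℕ) : ℝ :=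
  if r ≤ b then (vh : ℝ) - (α * b + (1 - α) * r) else α * r + (1 - α) * b

section AlphaAuction

variable {α : ℝ} {b r : ℕ}

lemma loser_payment_lt (hα1 : α < 1) (h : b < r) : α * r + (1 - α) * b < r := by
  have : (b : ℝ) < r := by exact_mod_cast h
  nlinarith

lemma winner_payment_gt (hα0 : 0 < α) (h : r < b) : (r : ℝ) < α * b + (1 - α) * r := by
  have : (r : ℝ) < b := by exact_mod_cast h
  nlinarith

lemma UlA_self (vl : ℕ) (α : ℝ) (p : ℕ) : UlA vl α p p = p := by
  simp only [UlA, lt_irrefl, if_false]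
  ring

lemma UhA_self (vh : ℕ) (α : ℝ) (p : ℕ) : UhA vh α p p = vh - p := by
  simp only [UhA, le_refl, if_true]
  ring

lemma UlA_lt_UlA_self {vl p : ℕ} (hα0 : 0 < α) (hα1 : α < 1) (hvl : vl ≤ 2 * p) (hb : b ≠ p) :
    UlA vl α b p < UlA vl α p p := by
  have hvl' : (vl : ℝ) ≤ 2 * p := by exact_mod_cast hvl
  rw [UlA_self]
  rcases hb.lt_or_gt with h | h
  · rw [UlA, if_neg h.not_gt]
    exact loser_payment_lt hα1 h
  · rw [UlA, if_pos h]
    linarith [winner_payment_gt hα0 h]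

lemma UhA_lt_UhA_self {vh p : ℕ} (hα0 : 0 < α) (hα1 : α < 1) (hvh : 2 * p ≤ vh) (hb : b ≠ p) :
    UhA vh α b p < UhA vh α p p := by
  have hvh' : 2 * (p : ℝ) ≤ vh := by exact_mod_cast hvh
  rw [UhA_self]
  rcases hb.lt_or_gt with h | h
  · rw [UhA, if_neg h.not_ge]
    linarith [loser_payment_lt hα1 h]
  · rw [UhA, if_pos h.le]
    linarith [winner_payment_gt hα0 h]

end AlphaAuction

theorem stmt3_general (pbar vl vh cl ch : ℕ) (hvl : vl = 2 * cl) (hvh : vh = 2 * ch)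
    (α : ℝ) (hα0 : 0 < α) (hα1 : α < 1)
    (p : ℕ) (hp1 : cl ≤ p) (hp2 : p ≤ ch) :
    (∀ b ≤ pbar, b ≠ p → UlA vl α b p < UlA vl α p p) ∧
    (∀ b ≤ pbar, b ≠ p → UhA vh α b p < UhA vh α p p) :=
  ⟨fun _ _ hb => UlA_lt_UlA_self hα0 hα1 (by omega) hb,
    fun _ _ hb => UhA_lt_UhA_self hα0 hα1 (by omega) hb⟩

/-- For every interior `α` and every `p` in the Nash range `{cl,...,ch}`, both agents
bidding `p` is a strict Nash equilibrium of the α-auction: against the opponent bidding `p`,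
any other bid yields strictly lower payoff than bidding `p`. -/
theorem stmt3 (pbar vl vh cl ch : ℕ) (hvl : vl = 2 * cl) (hvh : vh = 2 * ch)
    (hcl : 0 < cl) (hclch : cl < ch) (hpbar : ch ≤ pbar)
    (α : ℝ) (hα0 : 0 < α) (hα1 : α < 1)
    (p : ℕ) (hp1 : cl ≤ p) (hp2 : p ≤ ch) :
    (∀ b ≤ pbar, b ≠ p → UlA vl α b p < UlA vl α p p) ∧
    (∀ b ≤ pbar, b ≠ p → UhA vh α b p < UhA vh α p p) :=
  stmt3_general pbar vl vh cl ch hvl hvh α hα0 hα1 p hp1 hp2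
end

section
/- In the winner-bid auction with valuations v_l < v_h and tie-breaker favoring the high-valuation agent, every Nash equilibrium is efficient: the high-valuation agent receives the object with probability one. -/
open Finset Filter

/-- Difference of two expected payoffs of the low agent, as a single sum. -/
lemma eUl_sub (pbar vl : ℕ) (σh : ℕ → ℝ) (b b' : ℕ) :
    eUl pbar vl σh b - eUl pbar vl σh b' =
      ∑ r ∈ Finset.range (pbar + 1), σh r * (UlWB vl b r - UlWB vl b' r) := by
  unfold eUl
  rw [← Finset.sum_sub_distrib]
  exact Finset.sum_congr rfl fun r _ => by ring

/-- Sum of the two utilities at a bid profile. -/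
lemma utilities_add (vl vh bl bh : ℕ) :
    UlWB vl bl bh + UhWB vh bh bl = if bl ≤ bh then (vh : ℝ) else (vl : ℝ) := by
  unfold UlWB UhWB
  rcases le_or_gt bl bh with h | h
  · rw [if_neg (not_lt.mpr h), if_pos h, if_pos h]; ring
  · rw [if_pos h, if_neg (not_le.mpr h), if_neg (not_le.mpr h)]; ring

/-- The total payoff identity. -/
lemma payoff_identity (pbar vl vh : ℕ) (σl σh : ℕ → ℝ) :
    piL pbar vl σl σh + piH pbar vh σl σh =
      ∑ bh ∈ Finset.range (pbar + 1), ∑ bl ∈ Finset.range (pbar + 1),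
        σh bh * σl bl * (if bl ≤ bh then (vh : ℝ) else (vl : ℝ)) := by
  unfold piL piH eUl eUh
  simp only [Finset.mul_sum]
  rw [Finset.sum_comm (s := Finset.range (pbar + 1))]
  rw [← Finset.sum_add_distrib]
  refine Finset.sum_congr rfl fun bh _ => ?_
  rw [← Finset.sum_add_distrib]
  refine Finset.sum_congr rfl fun bl _ => ?_
  rw [← utilities_add vl vh bl bh]
  ring

/-- Every Nash equilibrium of the winner-bid auction is efficient: the high-valuation agent
receives the object with probability one. -/
theorem stmt5 (pbar vl vh cl ch : ℕ) (hvl : vl = 2 * cl) (hvh : vh = 2 * ch)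
    (hcl : 0 < cl) (hclch : cl < ch) (hpbar : ch ≤ pbar)
    (σl σh : ℕ → ℝ) (hNash : IsNashWB pbar vl vh σl σh) :
    ∑ bh ∈ Finset.range (pbar + 1), ∑ bl ∈ Finset.range (pbar + 1),
      σh bh * σl bl * (if bl ≤ bh then (1 : ℝ) else 0) = 1 := by
  obtain ⟨⟨hl0, hlz, hls⟩, ⟨hh0, hhz, hhs⟩, hBRl, hBRh⟩ := hNash
  set R := Finset.range (pbar + 1) with hR
  -- product of the two total masses is 1
  have hprod : ∑ bh ∈ R, ∑ bl ∈ R, σh bh * σl bl = 1 := by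
    rw [← Finset.sum_mul_sum, hhs, hls, one_mul]
  -- The key claim: every positive-probability low bid is ≤ every positive-probability high bid
  have key : ∀ a b : ℕ, 0 < σl a → 0 < σh b → a ≤ b := by
    by_contra hcon
    push_neg at hcon
    obtain ⟨a, b, ha, hb, hba⟩ := hcon
    -- supports
    have hapb : a ≤ pbar := by
      by_contra h; push_neg at h; rw [hlz a h] at ha; exact lt_irrefl 0 ha
    have hbpb : b ≤ pbar := by
      by_contra h; push_neg at h; rw [hhz b h] at hb; exact lt_irrefl 0 hb
    set Sl := R.filter (fun x => 0 < σl x) with hSldef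
    set Sh := R.filter (fun x => 0 < σh x) with hShdef
    have haSl : a ∈ Sl := by
      rw [hSldef]; exact Finset.mem_filter.mpr ⟨Finset.mem_range.mpr (Nat.lt_succ_of_le hapb), ha⟩
    have hbSh : b ∈ Sh := by
      rw [hShdef]; exact Finset.mem_filter.mpr ⟨Finset.mem_range.mpr (Nat.lt_succ_of_le hbpb), hb⟩
    set M := Sl.max' ⟨a, haSl⟩ with hMdef
    set m := Sh.min' ⟨b, hbSh⟩ with hmdef
    have hMSl : M ∈ Sl := Finset.max'_mem _ _
    have hmSh : m ∈ Sh := Finset.min'_mem _ _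
    have hMpb : M ≤ pbar := Nat.lt_succ_iff.mp (Finset.mem_range.mp (Finset.mem_filter.mp hMSl).1)
    have hmpb : m ≤ pbar := Nat.lt_succ_iff.mp (Finset.mem_range.mp (Finset.mem_filter.mp hmSh).1)
    have hσlM : 0 < σl M := (Finset.mem_filter.mp hMSl).2
    have hσhm : 0 < σh m := (Finset.mem_filter.mp hmSh).2
    have haM : a ≤ M := Finset.le_max' _ _ haSl
    have hmb : m ≤ b := Finset.min'_le _ _ hbSh
    have hmM : m < M := lt_of_le_of_lt hmb (lt_of_lt_of_le hba haM)
    -- support bounds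
    have hlM : ∀ r, M < r → σl r = 0 := by
      intro r hr
      by_contra h
      have hrpos : 0 < σl r := lt_of_le_of_ne (hl0 r) (Ne.symm h)
      have hrpb : r ≤ pbar := by
        by_contra h'; push_neg at h'; exact h (hlz r h')
      have : r ∈ Sl := Finset.mem_filter.mpr ⟨Finset.mem_range.mpr (Nat.lt_succ_of_le hrpb), hrpos⟩
      exact absurd (Finset.le_max' _ _ this) (not_le.mpr hr)
    have hhm : ∀ r, r < m → σh r = 0 := by
      intro r hr
      by_contra h
      have hrpos : 0 < σh r := lt_of_le_of_ne (hh0 r) (Ne.symm h)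
      have hrpb : r ≤ pbar := le_trans (le_of_lt hr) hmpb
      have : r ∈ Sh := Finset.mem_filter.mpr ⟨Finset.mem_range.mpr (Nat.lt_succ_of_le hrpb), hrpos⟩
      exact absurd (Finset.min'_le _ _ this) (not_le.mpr hr)
    -- optimality of M for the low agent
    have hoptM : ∀ b' ≤ pbar, eUl pbar vl σh b' ≤ eUl pbar vl σh M := hBRl M hMpb hσlM
    -- Lemma A : M + m ≤ vl
    have hA : M + m ≤ vl := by
      by_contra hA
      push_neg at hA
      have hAc : (vl : ℝ) < (M : ℝ) + (m : ℝ) := by exact_mod_cast hA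
      have h1 : eUl pbar vl σh m ≤ eUl pbar vl σh M := hoptM m hmpb
      have h2 : eUl pbar vl σh M - eUl pbar vl σh m < 0 := by
        rw [eUl_sub]
        have hlt : ∑ r ∈ R, σh r * (UlWB vl M r - UlWB vl m r) < ∑ _r ∈ R, (0 : ℝ) := by
          apply Finset.sum_lt_sum
          · intro r _
            rcases lt_or_ge r m with h | h
            · rw [hhm r h]; simp
            · rcases lt_or_ge r M with h' | h'
              · rw [UlWB, UlWB, if_pos h', if_neg (not_lt.mpr h)]
                apply mul_nonpos_of_nonneg_of_nonpos (hh0 r)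
                have : (m : ℝ) ≤ (r : ℝ) := by exact_mod_cast h
                linarith
              · rw [UlWB, UlWB, if_neg (not_lt.mpr h'), if_neg (not_lt.mpr h)]
                simp
          · refine ⟨m, Finset.mem_range.mpr (Nat.lt_succ_of_le hmpb), ?_⟩
            rw [UlWB, UlWB, if_pos hmM, if_neg (lt_irrefl m)]
            apply mul_neg_of_pos_of_neg hσhm
            linarith
        simpa using hlt
      linarith
    -- case split on 2*M ≤ vl
    rcases le_or_gt (2 * M) vl with hcase | hcase
    · -- aggregate-payoff contradiction
      -- piL ≥ eUl M
      have hpiL : eUl pbar vl σh M ≤ piL pbar vl σl σh := by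
        have : eUl pbar vl σh M = ∑ x ∈ R, σl x * eUl pbar vl σh M := by
          rw [← Finset.sum_mul, hls, one_mul]
        rw [this]
        apply Finset.sum_le_sum
        intro i hi
        rcases eq_or_lt_of_le (hl0 i) with h | h
        · rw [← h]; simp
        · exact mul_le_mul_of_nonneg_left
            (hBRl i (Nat.lt_succ_iff.mp (Finset.mem_range.mp hi)) h M hMpb) (le_of_lt h)
      -- eUh M = vh - M
      have heUhM : eUh pbar vh σl M = (vh : ℝ) - (M : ℝ) := by
        unfold eUh
        have : ∀ r ∈ R, σl r * UhWB vh M r = σl r * ((vh : ℝ) - (M : ℝ)) := by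
          intro r _
          rcases le_or_gt r M with h | h
          · rw [UhWB, if_pos h]
          · rw [hlM r h]; ring
        rw [Finset.sum_congr rfl this, ← Finset.sum_mul, hls, one_mul]
      -- piH ≥ vh - M
      have hpiH : (vh : ℝ) - (M : ℝ) ≤ piH pbar vh σl σh := by
        rw [← heUhM]
        have : eUh pbar vh σl M = ∑ x ∈ R, σh x * eUh pbar vh σl M := by
          rw [← Finset.sum_mul, hhs, one_mul]
        rw [this]
        apply Finset.sum_le_sum
        intro i hi
        rcases eq_or_lt_of_le (hh0 i) with h | h
        · rw [← h]; simp
        · exact mul_le_mul_of_nonneg_left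
            (hBRh i (Nat.lt_succ_iff.mp (Finset.mem_range.mp hi)) h M hMpb) (le_of_lt h)
      -- eUl M ≥ M
      have heUlM : (M : ℝ) ≤ eUl pbar vl σh M := by
        unfold eUl
        have hM1 : (M : ℝ) = ∑ r ∈ R, σh r * (M : ℝ) := by
          rw [← Finset.sum_mul, hhs, one_mul]
        rw [hM1]
        apply Finset.sum_le_sum
        intro r _
        apply mul_le_mul_of_nonneg_left _ (hh0 r)
        rw [UlWB]
        rcases lt_or_ge r M with h | h
        · rw [if_pos h]
          have : (2 : ℝ) * (M : ℝ) ≤ (vl : ℝ) := by exact_mod_cast hcase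
          linarith
        · rw [if_neg (not_lt.mpr h)]
          exact_mod_cast h
      -- the winning probability term
      have hterm : ∀ bh ∈ R, ∀ bl ∈ R,
          σh bh * σl bl * (if bl ≤ bh then (vh : ℝ) else (vl : ℝ)) ≤
            σh bh * σl bl * (vh : ℝ) -
              ((vh : ℝ) - (vl : ℝ)) * (σh bh * σl bl * (if bl ≤ bh then (0 : ℝ) else 1)) := by
        intro bh _ bl _
        rcases le_or_gt bl bh with h | h
        · rw [if_pos h, if_pos h]; ring_nf; simp
        · rw [if_neg (not_le.mpr h), if_neg (not_le.mpr h)]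
          have := mul_nonneg (mul_nonneg (hh0 bh) (hl0 bl)) (le_of_lt (show (0:ℝ) < 1 by norm_num))
          ring_nf
          nlinarith [mul_nonneg (hh0 bh) (hl0 bl)]
      -- W := probability the low agent wins
      set W := ∑ bh ∈ R, ∑ bl ∈ R, σh bh * σl bl * (if bl ≤ bh then (0 : ℝ) else 1) with hWdef
      have hWexact : ∀ bh ∈ R, ∀ bl ∈ R,
          σh bh * σl bl * (if bl ≤ bh then (vh : ℝ) else (vl : ℝ)) =
            σh bh * σl bl * (vh : ℝ) -
              ((vh : ℝ) - (vl : ℝ)) * (σh bh * σl bl * (if bl ≤ bh then (0 : ℝ) else 1)) := by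
        intro bh _ bl _
        rcases le_or_gt bl bh with h | h
        · rw [if_pos h, if_pos h]; ring
        · rw [if_neg (not_le.mpr h), if_neg (not_le.mpr h)]; ring
      have hsum_eq : ∑ bh ∈ R, ∑ bl ∈ R,
          σh bh * σl bl * (if bl ≤ bh then (vh : ℝ) else (vl : ℝ)) =
            (vh : ℝ) - ((vh : ℝ) - (vl : ℝ)) * W := by
        have h2 : ∑ bh ∈ R, ∑ bl ∈ R, σh bh * σl bl * (vh : ℝ) = (vh : ℝ) := by
          have : ∀ bh ∈ R, ∑ bl ∈ R, σh bh * σl bl * (vh : ℝ) =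
              (∑ bl ∈ R, σh bh * σl bl) * (vh : ℝ) := by
            intro bh _; rw [Finset.sum_mul]
          rw [Finset.sum_congr rfl this, ← Finset.sum_mul, hprod, one_mul]
        calc ∑ bh ∈ R, ∑ bl ∈ R, σh bh * σl bl * (if bl ≤ bh then (vh : ℝ) else (vl : ℝ))
            = ∑ bh ∈ R, (∑ bl ∈ R, σh bh * σl bl * (vh : ℝ) -
                ∑ bl ∈ R, ((vh : ℝ) - (vl : ℝ)) * (σh bh * σl bl * (if bl ≤ bh then (0 : ℝ) else 1))) := by
              refine Finset.sum_congr rfl fun bh hbh => ?_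
              rw [← Finset.sum_sub_distrib]
              exact Finset.sum_congr rfl fun bl hbl => hWexact bh hbh bl hbl
          _ = (∑ bh ∈ R, ∑ bl ∈ R, σh bh * σl bl * (vh : ℝ)) -
                ∑ bh ∈ R, ∑ bl ∈ R, ((vh : ℝ) - (vl : ℝ)) * (σh bh * σl bl * (if bl ≤ bh then (0 : ℝ) else 1)) :=
              Finset.sum_sub_distrib _ _
          _ = (vh : ℝ) - ((vh : ℝ) - (vl : ℝ)) * W := by
              rw [h2, hWdef, Finset.mul_sum]
              congr 1
              exact Finset.sum_congr rfl fun bh _ => (Finset.mul_sum _ _ _).symm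
      -- lower bound on W
      have hWpos : σh m * σl M ≤ W := by
        rw [hWdef]
        have hnn : ∀ bh ∈ R, (0 : ℝ) ≤ ∑ bl ∈ R, σh bh * σl bl * (if bl ≤ bh then (0 : ℝ) else 1) := by
          intro bh _
          apply Finset.sum_nonneg
          intro bl _
          apply mul_nonneg (mul_nonneg (hh0 bh) (hl0 bl))
          split <;> norm_num
        have hm_mem : m ∈ R := Finset.mem_range.mpr (Nat.lt_succ_of_le hmpb)
        have hM_mem : M ∈ R := Finset.mem_range.mpr (Nat.lt_succ_of_le hMpb)
        have h1 : σh m * σl M ≤ ∑ bl ∈ R, σh m * σl bl * (if bl ≤ m then (0 : ℝ) else 1) := by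
          have h := Finset.single_le_sum (f := fun bl => σh m * σl bl * (if bl ≤ m then (0 : ℝ) else 1))
            (fun bl _ => by
              apply mul_nonneg (mul_nonneg (hh0 m) (hl0 bl)); split <;> norm_num) hM_mem
          simp only [if_neg (not_le.mpr hmM), mul_one] at h
          exact h
        have h2 := Finset.single_le_sum
          (f := fun bh => ∑ bl ∈ R, σh bh * σl bl * (if bl ≤ bh then (0 : ℝ) else 1)) hnn hm_mem
        linarith
      -- combine
      have hid := payoff_identity pbar vl vh σl σh
      have hvlvh : (vl : ℝ) < (vh : ℝ) := by
        have : vl < vh := by omega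
        exact_mod_cast this
      have hWp : 0 < σh m * σl M := mul_pos hσhm hσlM
      rw [hsum_eq] at hid
      nlinarith
    · -- 2*M > vl : low agent strictly prefers bidding vl - M + 1
      have hMvl : M ≤ vl := le_trans (Nat.le_add_right M m) hA
      set b' := vl - M + 1 with hb'def
      have hb'M : b' + 1 ≤ M := by omega
      have hmb' : m < b' := by omega
      have hb'pb : b' ≤ pbar := le_trans (by omega) hMpb
      have hcast : (b' : ℝ) = (vl : ℝ) - (M : ℝ) + 1 := by
        rw [hb'def]; push_cast [Nat.sub_add_cancel, Nat.cast_sub hMvl]; ring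
      have hb'Mc : (b' : ℝ) + 1 ≤ (M : ℝ) := by exact_mod_cast hb'M
      have h1 : eUl pbar vl σh b' ≤ eUl pbar vl σh M := hoptM b' hb'pb
      have h2 : eUl pbar vl σh M - eUl pbar vl σh b' < 0 := by
        rw [eUl_sub]
        have hlt : ∑ r ∈ R, σh r * (UlWB vl M r - UlWB vl b' r) < ∑ _r ∈ R, (0 : ℝ) := by
          apply Finset.sum_lt_sum
          · intro r _
            rcases lt_or_ge r b' with h | h
            · have hrM : r < M := by omega
              rw [UlWB, UlWB, if_pos hrM, if_pos h]
              apply mul_nonpos_of_nonneg_of_nonpos (hh0 r)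
              linarith
            · rcases lt_or_ge r M with h' | h'
              · rw [UlWB, UlWB, if_pos h', if_neg (not_lt.mpr h)]
                apply mul_nonpos_of_nonneg_of_nonpos (hh0 r)
                have : (b' : ℝ) ≤ (r : ℝ) := by exact_mod_cast h
                linarith
              · rw [UlWB, UlWB, if_neg (not_lt.mpr h'), if_neg (show ¬ r < b' by omega)]
                simp
          · refine ⟨m, Finset.mem_range.mpr (Nat.lt_succ_of_le hmpb), ?_⟩
            rw [UlWB, UlWB, if_pos hmM, if_pos hmb']
            apply mul_neg_of_pos_of_neg hσhm
            linarith
        simpa using hlt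
      linarith
  -- conclude : every term of the goal sum equals σh bh * σl bl
  have hgoal : ∀ bh ∈ R, ∀ bl ∈ R,
      σh bh * σl bl * (if bl ≤ bh then (1 : ℝ) else 0) = σh bh * σl bl := by
    intro bh _ bl _
    rcases eq_or_lt_of_le (hh0 bh) with h | h
    · rw [← h]; ring
    · rcases eq_or_lt_of_le (hl0 bl) with h' | h'
      · rw [← h']; ring
      · rw [if_pos (key bl bh h' h)]; ring
  calc ∑ bh ∈ R, ∑ bl ∈ R, σh bh * σl bl * (if bl ≤ bh then (1 : ℝ) else 0)
      = ∑ bh ∈ R, ∑ bl ∈ R, σh bh * σl bl := by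
        refine Finset.sum_congr rfl fun bh hbh => Finset.sum_congr rfl fun bl hbl => ?_
        exact hgoal bh hbh bl hbl
    _ = 1 := hprod
end

section
/- In the winner-bid auction with tie-breaker favoring the high-valuation agent, if σ = (σ_l, σ_h) is a Nash equilibrium in which the high-valuation agent bids p with probability one with c_l < p ≤ c_h, then σ_l(p) ≥ 1/(2(c_h − c_l) − 2(p − c_l) + 1), where c_l = v_l/2 and c_h = v_h/2. -/
open Finset Filter

/-! Against the pure bid `p`, a bid `b > p` earns the low-valuation agent `v_l - b < p`, which
bidding `0` secures, so `σ_l` is supported on `{0, …, p}`. Undercutting to `p - 1` then wins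
unless `l` bids `p`, in which case `h` collects `p`; comparing with the sure payoff `v_h - p` of
bidding `p` gives `σ_l(p) (v_h - 2p + 1) ≥ 1`. -/

namespace IsMixed

variable {pbar p : ℕ} {σ : ℕ → ℝ}

theorem le_of_eq_one (hσ : IsMixed pbar σ) (hp : σ p = 1) : p ≤ pbar :=
  not_lt.mp fun h => one_ne_zero (hp ▸ hσ.2.1 p h)

theorem eq_zero_of_eq_one (hσ : IsMixed pbar σ) (hp : σ p = 1) {r : ℕ} (hr : r ≠ p) :
    σ r = 0 := by
  by_cases hr' : r ≤ pbar
  · have hpmem : p ∈ range (pbar + 1) := mem_range.2 (Nat.lt_succ_of_le (hσ.le_of_eq_one hp))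
    have hrest : ∑ b ∈ (range (pbar + 1)).erase p, σ b = 0 := by
      linarith [sum_erase_add _ σ hpmem, hσ.2.2]
    exact (sum_eq_zero_iff_of_nonneg fun b _ => hσ.1 b).1 hrest r
      (mem_erase.2 ⟨hr, mem_range.2 (by omega)⟩)
  · exact hσ.2.1 r (by omega)

theorem sum_mul_eq_of_eq_one (hσ : IsMixed pbar σ) (hp : σ p = 1) (f : ℕ → ℝ) :
    ∑ r ∈ range (pbar + 1), σ r * f r = f p := by
  rw [sum_eq_single_of_mem p (mem_range.2 (Nat.lt_succ_of_le (hσ.le_of_eq_one hp)))]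
  · rw [hp, one_mul]
  · intro r _ hr
    rw [hσ.eq_zero_of_eq_one hp hr, zero_mul]

theorem eUh_eq_of_support_le (hσ : IsMixed pbar σ) {b : ℕ} (hsupp : ∀ r, b < r → σ r = 0)
    (vh : ℕ) : eUh pbar vh σ b = vh - b := by
  have hterm : ∀ r ∈ range (pbar + 1), σ r * UhWB vh b r = σ r * (vh - b) := by
    intro r _
    by_cases hr : r ≤ b
    · rw [UhWB, if_pos hr]
    · rw [hsupp r (not_le.mp hr), zero_mul, zero_mul]
  rw [eUh, sum_congr rfl hterm, ← sum_mul, hσ.2.2, one_mul]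

theorem eUh_eq_of_support_le_succ (hσ : IsMixed pbar σ) {q : ℕ} (hq : q + 1 ≤ pbar)
    (hsupp : ∀ r, q + 1 < r → σ r = 0) (vh : ℕ) :
    eUh pbar vh σ q = (1 - σ (q + 1)) * (vh - q) + σ (q + 1) * (q + 1 : ℕ) := by
  have hmem : q + 1 ∈ range (pbar + 1) := mem_range.2 (by omega)
  have hterm :
      ∀ r ∈ (range (pbar + 1)).erase (q + 1), σ r * UhWB vh q r = σ r * (vh - q) := by
    intro r hr
    by_cases hrq : r ≤ q
    · rw [UhWB, if_pos hrq]
    · rw [hsupp r (by have := (mem_erase.1 hr).1; omega), zero_mul, zero_mul]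
  have hrest : ∑ r ∈ (range (pbar + 1)).erase (q + 1), σ r = 1 - σ (q + 1) := by
    linarith [sum_erase_add _ σ hmem, hσ.2.2]
  rw [eUh, ← sum_erase_add _ _ hmem, sum_congr rfl hterm, ← sum_mul, hrest, UhWB,
    if_neg (by omega)]

end IsMixed

namespace IsNashWB

variable {pbar vl vh p : ℕ} {σl σh : ℕ → ℝ}

theorem sigmaL_eq_zero_of_lt (hN : IsNashWB pbar vl vh σl σh) (hδ : σh p = 1)
    (hvl : vl ≤ 2 * p) {b : ℕ} (hb : p < b) : σl b = 0 := by
  by_cases hbpbar : b ≤ pbar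
  · refine ((hN.1.1 b).eq_or_lt.resolve_right fun hpos => ?_).symm
    have hbest := hN.2.2.1 b hbpbar hpos 0 (Nat.zero_le _)
    simp only [eUl, hN.2.1.sum_mul_eq_of_eq_one hδ, UlWB, if_neg (Nat.not_lt_zero p),
      if_pos hb] at hbest
    have : (vl : ℝ) < p + b := by exact_mod_cast (by omega : vl < p + b)
    linarith
  · exact hN.1.2.1 b (by omega)

theorem one_le_sigmaL_mul {q : ℕ} (hN : IsNashWB pbar vl vh σl σh) (hδ : σh (q + 1) = 1)
    (hsupp : ∀ r, q + 1 < r → σl r = 0) :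
    1 ≤ σl (q + 1) * ((vh : ℝ) - 2 * (q + 1 : ℕ) + 1) := by
  have hq : q + 1 ≤ pbar := hN.2.1.le_of_eq_one hδ
  have hbest := hN.2.2.2 (q + 1) hq (hδ ▸ one_pos) q (by omega)
  rw [hN.1.eUh_eq_of_support_le hsupp, hN.1.eUh_eq_of_support_le_succ hq hsupp] at hbest
  push_cast at hbest ⊢
  linarith

end IsNashWB

theorem stmt9_general (pbar vl vh cl ch : ℕ) (hvl : vl = 2 * cl) (hvh : vh = 2 * ch)
    (σl σh : ℕ → ℝ) (hNash : IsNashWB pbar vl vh σl σh)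
    (p : ℕ) (hp1 : cl < p) (hδ : σh p = 1) :
    (1 : ℝ) / ((2 * (ch - cl) - 2 * (p - cl) + 1 : ℕ) : ℝ) ≤ σl p := by
  obtain ⟨q, rfl⟩ : ∃ q, p = q + 1 := Nat.exists_eq_add_one.2 (by omega)
  have hsupp : ∀ r, q + 1 < r → σl r = 0 := fun r =>
    hNash.sigmaL_eq_zero_of_lt hδ (by omega)
  have hkey := hNash.one_le_sigmaL_mul hδ hsupp
  set N : ℕ := 2 * (ch - cl) - 2 * (q + 1 - cl) + 1 with hN
  -- truncated subtraction can only enlarge the denominator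
  have hden : (vh : ℝ) - 2 * (q + 1 : ℕ) + 1 ≤ N := by
    have : (vh : ℤ) - 2 * (q + 1 : ℕ) + 1 ≤ N := by omega
    exact_mod_cast this
  rw [div_le_iff₀ (by positivity)]
  exact hkey.trans (mul_le_mul_of_nonneg_left hden (hNash.1.1 _))

/-- In a Nash equilibrium of the winner-bid auction in which the high-valuation agent bids
`p` with probability one, with `cl < p ≤ ch`, one has
`σl p ≥ 1 / (2*(ch - cl) - 2*(p - cl) + 1)`. -/
theorem stmt9 (pbar vl vh cl ch : ℕ) (hvl : vl = 2 * cl) (hvh : vh = 2 * ch)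
    (hcl : 0 < cl) (hclch : cl < ch) (hpbar : ch ≤ pbar)
    (σl σh : ℕ → ℝ) (hNash : IsNashWB pbar vl vh σl σh)
    (p : ℕ) (hp1 : cl < p) (hp2 : p ≤ ch) (hδ : σh p = 1) :
    (1 : ℝ) / ((2 * (ch - cl) - 2 * (p - cl) + 1 : ℕ) : ℝ) ≤ σl p :=
  stmt9_general pbar vl vh cl ch hvl hvh σl σh hNash p hp1 hδ
end

section
/- Let σ be a Nash equilibrium of the winner-bid auction (tie-breaker favoring h) with payoff-determinant bid p satisfying τ = p − c_l > 1, and suppose σ_l(b) ≥ σ_l(p) for all b with max{0, c_l − 3τ + 1} ≤ b ≤ p. Then p − c_l ≤ max{2c_h/3 − c_l, (c_h − c_l)/3}, where c_l = v_l/2, c_h = v_h/2. -/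
open Finset Filter

/-- If `σ` is a Nash equilibrium of the winner-bid auction with payoff-determinant bid `p`,
`τ = p - cl > 1`, and `σl b ≥ σl p` on `{max{0, cl - 3τ + 1},...,p}`, then
`p - cl ≤ max{2*ch/3 - cl, (ch - cl)/3}`. -/
theorem stmt10 (pbar vl vh cl ch : ℕ) (hvl : vl = 2 * cl) (hvh : vh = 2 * ch)
    (hcl : 0 < cl) (hclch : cl < ch) (hpbar : ch ≤ pbar)
    (σl σh : ℕ → ℝ) (hNash : IsNashWB pbar vl vh σl σh)
    (p : ℕ) (hp1 : cl ≤ p) (hp2 : p ≤ ch)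
    (hsuppl : ∀ b, 0 < σl b → b ≤ p) (hsupph : ∀ b, 0 < σh b → p ≤ b)
    (hpl : 0 < σl p) (hph : 0 < σh p)
    (hτ : 1 < p - cl)
    (hlb : ∀ b, cl - (3 * (p - cl) - 1) ≤ b → b ≤ p → σl p ≤ σl b) :
    (p : ℝ) - cl ≤ max (2 * (ch : ℝ) / 3 - cl) (((ch : ℝ) - cl) / 3) := by
  obtain ⟨hMl, hMh, hBRl, hBRh⟩ := hNash
  obtain ⟨hl0, hl1, hl2⟩ := hMl
  have hppbar : p ≤ pbar := le_trans hp2 hpbar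
  have hp1' : 1 ≤ p := by omega
  have hpmem : p ∈ Finset.range (pbar + 1) := by
    simp [Finset.mem_range]; omega
  -- Step 1: h's payoff at bid p is vh - p
  have hA : eUh pbar vh σl p = (vh : ℝ) - p := by
    unfold eUh
    have hcong : ∀ r ∈ Finset.range (pbar + 1),
        σl r * UhWB vh p r = σl r * ((vh : ℝ) - p) := by
      intro r _
      rcases eq_or_lt_of_le (hl0 r) with h | h
      · rw [← h]; ring
      · have hrp := hsuppl r h
        unfold UhWB
        rw [if_pos hrp]
    rw [Finset.sum_congr rfl hcong, ← Finset.sum_mul, hl2, one_mul]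
  -- h's payoff at bid p-1
  have hB : eUh pbar vh σl (p - 1)
      = (1 - σl p) * ((vh : ℝ) - p + 1) + σl p * p := by
    unfold eUh
    have hcong : ∀ r ∈ Finset.range (pbar + 1),
        σl r * UhWB vh (p - 1) r
          = σl r * ((vh : ℝ) - p + 1)
            + (if r = p then σl p * ((p : ℝ) - ((vh : ℝ) - p + 1)) else 0) := by
      intro r _
      by_cases hrp : r = p
      · subst hrp
        unfold UhWB
        rw [if_neg (by omega)]
        simp
        ring
      · rw [if_neg hrp]
        rcases eq_or_lt_of_le (hl0 r) with h | h
        · rw [← h]; ring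
        · have hr_le : r ≤ p := hsuppl r h
          have hr_le' : r ≤ p - 1 := by omega
          unfold UhWB
          rw [if_pos hr_le']
          have : ((p - 1 : ℕ) : ℝ) = (p : ℝ) - 1 := by
            have := Nat.cast_sub hp1' (R := ℝ)
            simpa using this
          rw [this]
          ring
    rw [Finset.sum_congr rfl hcong, Finset.sum_add_distrib, ← Finset.sum_mul, hl2,
      one_mul, Finset.sum_ite_eq' _ p, if_pos hpmem]
    ring
  -- equilibrium inequality
  have hBR := hBRh p hppbar hph (p - 1) (by omega)
  rw [hA, hB] at hBR
  have hlow : 1 ≤ σl p * ((vh : ℝ) - 2 * p + 1) := by nlinarith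
  -- Step 2: combinatorial upper bound
  set m := cl - (3 * (p - cl) - 1) with hmdef
  have hmp : m ≤ p := by omega
  have hIc : Finset.Icc m p ⊆ Finset.range (pbar + 1) := by
    intro x hx
    rw [Finset.mem_Icc] at hx
    rw [Finset.mem_range]
    omega
  have hsum1 : ∑ b ∈ Finset.Icc m p, σl b ≤ 1 := by
    rw [← hl2]
    exact Finset.sum_le_sum_of_subset_of_nonneg hIc (fun i _ _ => hl0 i)
  have hsum2 : ((p + 1 - m : ℕ) : ℝ) * σl p ≤ ∑ b ∈ Finset.Icc m p, σl b := by
    have hcard : ((Finset.Icc m p).card : ℝ) * σl p = ∑ _b ∈ Finset.Icc m p, σl p := by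
      rw [Finset.sum_const, nsmul_eq_mul]
    rw [← Nat.card_Icc, hcard]
    refine Finset.sum_le_sum ?_
    intro b hb
    rw [Finset.mem_Icc] at hb
    exact hlb b hb.1 hb.2
  have hcomb : ((p + 1 - m : ℕ) : ℝ) * σl p ≤ σl p * ((vh : ℝ) - 2 * p + 1) :=
    le_trans (le_trans hsum2 hsum1) hlow
  have hcount : ((p + 1 - m : ℕ) : ℝ) ≤ (vh : ℝ) - 2 * p + 1 := by
    rw [mul_comm (σl p)] at hcomb
    exact le_of_mul_le_mul_right hcomb hpl
  -- cast to integers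
  have hZ : ((p + 1 - m : ℕ) : ℤ) ≤ 2 * (ch : ℤ) - 2 * p + 1 := by
    have hR : ((p + 1 - m : ℕ) : ℝ) = (((p + 1 - m : ℕ) : ℤ) : ℝ) := by push_cast; ring
    have hR' : (vh : ℝ) - 2 * p + 1 = ((2 * (ch : ℤ) - 2 * p + 1 : ℤ) : ℝ) := by
      rw [hvh]; push_cast; ring
    rw [hR, hR'] at hcount
    exact_mod_cast hcount
  rcases le_or_gt cl (3 * (p - cl) - 1) with hc | hc
  · -- m = 0, count = p + 1 : left branch
    have h3 : 3 * p ≤ 2 * ch := by omega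
    have h3' : 3 * (p : ℝ) ≤ 2 * ch := by exact_mod_cast h3
    refine le_trans ?_ (le_max_left _ _)
    linarith
  · -- count = 4τ : right branch, uses parity
    have h3 : 3 * p ≤ ch + 2 * cl := by omega
    have h3' : 3 * (p : ℝ) ≤ (ch : ℝ) + 2 * cl := by exact_mod_cast h3
    refine le_trans ?_ (le_max_right _ _)
    linarith
end

section
/- In the winner-bid auction with ties to h, suppose σ_l is supported in {0,...,p} with p in the Nash range and σ_l(r) ≥ σ_l(p) ≥ 1/(2(c_h − c_l) − 2τ + 1) for all b ≤ r ≤ p, where τ = p − c_l. Then for each s with b ≤ s < p, the high-valuation agent's expected payoff of bidding s strictly exceeds that of bidding s − 1: U(δ_s | σ_l; v_h) − U(δ_{s−1} | σ_l; v_h) = Σ_{r≥s} σ_l(r) − 1 + 2σ_l(s)(c_h − s) > 0. -/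
open Finset Filter

/-!
Raising the bid from `s - 1` to `s` costs one unit against every bid `r < s` (both bids win),
gains `v_h - 2s` against `r = s` (winning at price `s` instead of receiving `s`), and changes
nothing against `r > s`. Hence the payoff difference is `σ(s)(v_h - 2s) - σ({r < s})`, which is
the stated identity once `σ({r < s}) = 1 - σ([s, p̄])`. For positivity, `[s, p]` carries `p + 1 - s`
atoms of mass at least `σ(p)` and `σ(s) ≥ σ(p)`, so the difference is at least
`σ(p)(p + 1 - s + 2(c_h - s)) - 1 > σ(p)(2(c_h - p) + 1) - 1 ≥ 0`.
-/

theorem UhWB_sub_UhWB_pred (vh : ℕ) {s r : ℕ} (hs : 1 ≤ s) :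
    UhWB vh s r - UhWB vh (s - 1) r =
      if r < s then -1 else if r = s then (vh : ℝ) - 2 * s else 0 := by
  unfold UhWB
  rcases lt_trichotomy r s with h | rfl | h
  · rw [if_pos h.le, if_pos (by omega), if_pos h, Nat.cast_pred hs]
    ring
  · rw [if_pos le_rfl, if_neg (by omega), if_neg (lt_irrefl r), if_pos rfl]
    ring
  · rw [if_neg (by omega), if_neg (by omega), if_neg (by omega), if_neg h.ne', sub_self]

theorem eUh_sub_eUh_pred {pbar s : ℕ} (vh : ℕ) (σ : ℕ → ℝ) (hs : 1 ≤ s) (hsp : s ≤ pbar) :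
    eUh pbar vh σ s - eUh pbar vh σ (s - 1) =
      σ s * ((vh : ℝ) - 2 * s) - ∑ r ∈ range s, σ r := by
  simp only [eUh, ← sum_sub_distrib, ← mul_sub, UhWB_sub_UhWB_pred vh hs, mul_ite, mul_neg,
    mul_one, mul_zero]
  rw [sum_ite, sum_ite, sum_const_zero, add_zero, sum_neg_distrib, filter_filter]
  have hlow : {r ∈ range (pbar + 1) | r < s} = range s := by
    ext r
    simp only [mem_filter, mem_range]
    omega
  have hdiag : {r ∈ range (pbar + 1) | ¬r < s ∧ r = s} = {s} := by
    ext r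
    simp only [mem_filter, mem_range, mem_singleton]
    omega
  rw [hlow, hdiag, sum_singleton]
  ring

theorem sum_Icc_eq_one_sub_sum_range {pbar s : ℕ} {σ : ℕ → ℝ}
    (hσ : ∑ r ∈ range (pbar + 1), σ r = 1) (hsp : s ≤ pbar + 1) :
    ∑ r ∈ Icc s pbar, σ r = 1 - ∑ r ∈ range s, σ r := by
  rw [← hσ, ← sum_range_add_sum_Ico σ hsp, Ico_add_one_right_eq_Icc]
  ring

theorem mul_le_sum_Icc_of_le {σ : ℕ → ℝ} {c : ℝ} {s p pbar : ℕ} (hσ : ∀ r, 0 ≤ σ r)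
    (hp : p ≤ pbar) (hsp : s ≤ p + 1) (hc : ∀ r ∈ Icc s p, c ≤ σ r) :
    ((p : ℝ) + 1 - s) * c ≤ ∑ r ∈ Icc s pbar, σ r := by
  calc ((p : ℝ) + 1 - s) * c = #(Icc s p) • c := by
        rw [Nat.card_Icc, nsmul_eq_mul, Nat.cast_sub hsp]
        push_cast
        ring
    _ ≤ ∑ r ∈ Icc s p, σ r := card_nsmul_le_sum _ _ _ hc
    _ ≤ ∑ r ∈ Icc s pbar, σ r :=
        sum_le_sum_of_subset_of_nonneg (Icc_subset_Icc_right hp) fun r _ _ => hσ r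

theorem stmt14_general (pbar vh cl ch : ℕ) (hvh : vh = 2 * ch)
    (hpbar : ch ≤ pbar)
    (σl : ℕ → ℝ) (hmix : IsMixed pbar σl)
    (p b : ℕ) (hp1 : cl ≤ p) (hp2 : p ≤ ch) (hb : 1 ≤ b)
    (hlow : ∀ r, b ≤ r → r ≤ p → σl p ≤ σl r)
    (hlb : (1 : ℝ) / ((2 * (ch - cl) - 2 * (p - cl) + 1 : ℕ) : ℝ) ≤ σl p) :
    ∀ s, b ≤ s → s < p →
      (eUh pbar vh σl s - eUh pbar vh σl (s - 1) =
        (∑ r ∈ Finset.Icc s pbar, σl r) - 1 + 2 * σl s * ((ch : ℝ) - s)) ∧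
      0 < eUh pbar vh σl s - eUh pbar vh σl (s - 1) := by
  intro s hbs hsp
  obtain ⟨hnn, -, hsum⟩ := hmix
  have hident : eUh pbar vh σl s - eUh pbar vh σl (s - 1) =
      (∑ r ∈ Icc s pbar, σl r) - 1 + 2 * σl s * ((ch : ℝ) - s) := by
    rw [eUh_sub_eUh_pred vh σl (by omega) (by omega), sum_Icc_eq_one_sub_sum_range hsum (by omega),
      hvh]
    push_cast
    ring
  refine ⟨hident, ?_⟩
  rw [hident]
  have hD : ((2 * (ch - cl) - 2 * (p - cl) + 1 : ℕ) : ℝ) = 2 * ((ch : ℝ) - p) + 1 := by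
    rw [show 2 * (ch - cl) - 2 * (p - cl) + 1 = 2 * (ch - p) + 1 by omega]
    push_cast [Nat.cast_sub hp2]
    ring
  have hsp' : (s : ℝ) < p := by exact_mod_cast hsp
  have hp2' : (p : ℝ) ≤ ch := by exact_mod_cast hp2
  rw [hD, div_le_iff₀ (by linarith)] at hlb
  have hσp : 0 < σl p := by nlinarith
  have htail := mul_le_sum_Icc_of_le hnn (hp2.trans hpbar) (by omega : s ≤ p + 1)
    fun r hr => hlow r (hbs.trans (mem_Icc.1 hr).1) (mem_Icc.1 hr).2
  have hσs : σl p ≤ σl s := hlow s hbs hsp.le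
  suffices 1 < (∑ r ∈ Icc s pbar, σl r) + 2 * σl s * ((ch : ℝ) - s) by linarith
  calc (1 : ℝ) ≤ σl p * (2 * ((ch : ℝ) - p) + 1) := hlb
    _ < ((p : ℝ) + 1 - s) * σl p + 2 * σl p * ((ch : ℝ) - s) := by nlinarith
    _ ≤ (∑ r ∈ Icc s pbar, σl r) + 2 * σl s * ((ch : ℝ) - s) := by gcongr; linarith

/-- If `σl` is supported in `{0,...,p}` with `p` in the Nash range, `σl r ≥ σl p` for all
`b ≤ r ≤ p`, and `σl p ≥ 1/(2(ch - cl) - 2τ + 1)` with `τ = p - cl`, then for every `s` with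
`b ≤ s < p` the high-valuation agent's expected payoff of bidding `s` strictly exceeds that
of bidding `s - 1`, with the stated identity. -/
theorem stmt14 (pbar vl vh cl ch : ℕ) (hvl : vl = 2 * cl) (hvh : vh = 2 * ch)
    (hcl : 0 < cl) (hclch : cl < ch) (hpbar : ch ≤ pbar)
    (σl : ℕ → ℝ) (hmix : IsMixed pbar σl)
    (p b : ℕ) (hp1 : cl ≤ p) (hp2 : p ≤ ch) (hb : 1 ≤ b)
    (hsupp : ∀ r, 0 < σl r → r ≤ p)
    (hlow : ∀ r, b ≤ r → r ≤ p → σl p ≤ σl r)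
    (hlb : (1 : ℝ) / ((2 * (ch - cl) - 2 * (p - cl) + 1 : ℕ) : ℝ) ≤ σl p) :
    ∀ s, b ≤ s → s < p →
      (eUh pbar vh σl s - eUh pbar vh σl (s - 1) =
        (∑ r ∈ Finset.Icc s pbar, σl r) - 1 + 2 * σl s * ((ch : ℝ) - s)) ∧
      0 < eUh pbar vh σl s - eUh pbar vh σl (s - 1) :=
  stmt14_general pbar vh cl ch hvh hpbar σl hmix p b hp1 hp2 hb hlow hlb
end

section
/- In the loser-bid auction with tie-breaker favoring the high-valuation agent, for any bid b_h < c_h = v_h/2, the pure strategy b_h of the high-valuation agent is weakly dominated by the bid c_h. -/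
/-! A bid `b` with `b + c ≤ vh` never earns more than a higher bid `c`: against a rival bid
`r ≤ b` both win at the same price, against `b < r ≤ c` only `c` wins and `vh - r ≥ b`,
and against `r > c` both lose and collect their own bids. At `r = c` the gap is
`vh - c - b`, which is positive for `vh = 2c` and `b < c`. -/

namespace UhLB

variable {vh b c r : ℕ}

theorem of_le (h : r ≤ b) : UhLB vh b r = vh - r := if_pos h

theorem of_lt (h : b < r) : UhLB vh b r = b := if_neg (not_le.mpr h)

theorem le_of_le_bid (hbc : b ≤ c) (hvh : b + c ≤ vh) : UhLB vh b r ≤ UhLB vh c r := by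
  rcases le_or_gt r b with hrb | hbr
  · rw [of_le hrb, of_le (hrb.trans hbc)]
  rcases le_or_gt r c with hrc | hcr
  · rw [of_lt hbr, of_le hrc, le_sub_iff_add_le]
    exact_mod_cast (Nat.add_le_add_left hrc b).trans hvh
  · rw [of_lt hbr, of_lt hcr]
    exact_mod_cast hbc

theorem lt_at_rival_bid (hbc : b < c) (hvh : b + c < vh) : UhLB vh b c < UhLB vh c c := by
  rw [of_lt hbc, of_le le_rfl, lt_sub_iff_add_lt]
  exact_mod_cast hvh

end UhLB

theorem stmt16_general (pbar vh ch : ℕ) (hvh : vh = 2 * ch) (hpbar : ch ≤ pbar)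
    (bh : ℕ) (hbh : bh < ch) :
    (∀ r ≤ pbar, UhLB vh bh r ≤ UhLB vh ch r) ∧
    (∃ r ≤ pbar, UhLB vh bh r < UhLB vh ch r) :=
  ⟨fun _ _ => UhLB.le_of_le_bid hbh.le (by omega),
    ⟨ch, hpbar, UhLB.lt_at_rival_bid hbh (by omega)⟩⟩

/-- In the loser-bid auction, any bid `bh < ch = vh/2` of the high-valuation agent is weakly
dominated by the bid `ch`. -/
theorem stmt16 (pbar vl vh cl ch : ℕ) (hvl : vl = 2 * cl) (hvh : vh = 2 * ch)
    (hcl : 0 < cl) (hclch : cl < ch) (hpbar : ch ≤ pbar)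
    (bh : ℕ) (hbh : bh < ch) :
    (∀ r ≤ pbar, UhLB vh bh r ≤ UhLB vh ch r) ∧
    (∃ r ≤ pbar, UhLB vh bh r < UhLB vh ch r) :=
  stmt16_general pbar vh ch hvh hpbar bh hbh
end

section
/- In any α-auction (0 ≤ α ≤ 1, ties to h) with valuations v_l < v_h, the maximin payoff of agent i equals c_i = v_i/2, attained by bidding c_i: bidding c_i guarantees agent i a payoff of at least c_i against every bid of the opponent, and no bid guarantees strictly more. -/
/-!
The α-auction payment `α · (winner bid) + (1 - α) · (loser bid)` is a convex combination of the
two bids, so it lies between them. Bidding `c = v / 2` therefore caps the payment at `c` when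
winning (both bids are at most `c`) and guarantees at least `c` when losing; so either outcome
is worth at least `c`. Conversely, against a rival bid of `c` every bid `b` yields at most `c`:
winning costs a payment of at least `c` out of `2c`, losing earns a payment of at most `c`.
-/

theorem payment_le {α x y c : ℝ} (hα0 : 0 ≤ α) (hα1 : α ≤ 1) (hx : x ≤ c) (hy : y ≤ c) :
    α * x + (1 - α) * y ≤ c :=
  (Convex.combo_le_max x y hα0 (sub_nonneg.2 hα1) (add_sub_cancel α 1)).trans (max_le hx hy)

theorem le_payment {α x y c : ℝ} (hα0 : 0 ≤ α) (hα1 : α ≤ 1) (hx : c ≤ x) (hy : c ≤ y) :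
    c ≤ α * x + (1 - α) * y :=
  (le_min hx hy).trans (Convex.min_le_combo x y hα0 (sub_nonneg.2 hα1) (add_sub_cancel α 1))

section Maximin

variable {α : ℝ}

theorem le_UlA_bid_half (hα0 : 0 ≤ α) (hα1 : α ≤ 1) (c r : ℕ) :
    (c : ℝ) ≤ UlA (2 * c) α c r := by
  unfold UlA
  split_ifs with h
  · have := payment_le hα0 hα1 le_rfl (Nat.cast_le.2 h.le : (r : ℝ) ≤ c)
    push_cast
    linarith
  · exact le_payment hα0 hα1 (Nat.cast_le.2 (not_lt.1 h)) le_rfl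

theorem UlA_le_rival_half (hα0 : 0 ≤ α) (hα1 : α ≤ 1) (c b : ℕ) :
    UlA (2 * c) α b c ≤ c := by
  unfold UlA
  split_ifs with h
  · have := le_payment hα0 hα1 (Nat.cast_le.2 h.le : (c : ℝ) ≤ b) le_rfl
    push_cast
    linarith
  · exact payment_le hα0 hα1 le_rfl (Nat.cast_le.2 (not_lt.1 h))

theorem le_UhA_bid_half (hα0 : 0 ≤ α) (hα1 : α ≤ 1) (c r : ℕ) :
    (c : ℝ) ≤ UhA (2 * c) α c r := by
  unfold UhA
  split_ifs with h
  · have := payment_le hα0 hα1 le_rfl (Nat.cast_le.2 h : (r : ℝ) ≤ c)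
    push_cast
    linarith
  · exact le_payment hα0 hα1 (Nat.cast_le.2 (not_le.1 h).le) le_rfl

theorem UhA_le_rival_half (hα0 : 0 ≤ α) (hα1 : α ≤ 1) (c b : ℕ) :
    UhA (2 * c) α b c ≤ c := by
  unfold UhA
  split_ifs with h
  · have := le_payment hα0 hα1 (Nat.cast_le.2 h : (c : ℝ) ≤ b) le_rfl
    push_cast
    linarith
  · exact payment_le hα0 hα1 le_rfl (Nat.cast_le.2 (not_le.1 h).le)

end Maximin

theorem stmt17_general (pbar vl vh cl ch : ℕ) (hvl : vl = 2 * cl) (hvh : vh = 2 * ch)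
    (hclch : cl < ch) (hpbar : ch ≤ pbar)
    (α : ℝ) (hα0 : 0 ≤ α) (hα1 : α ≤ 1) :
    ((∀ r ≤ pbar, (cl : ℝ) ≤ UlA vl α cl r) ∧
      (∀ b ≤ pbar, ∃ r ≤ pbar, UlA vl α b r ≤ (cl : ℝ))) ∧
    ((∀ r ≤ pbar, (ch : ℝ) ≤ UhA vh α ch r) ∧
      (∀ b ≤ pbar, ∃ r ≤ pbar, UhA vh α b r ≤ (ch : ℝ))) := by
  subst hvl hvh
  have hcl : cl ≤ pbar := hclch.le.trans hpbar
  exact ⟨⟨fun r _ => le_UlA_bid_half hα0 hα1 cl r,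
      fun b _ => ⟨cl, hcl, UlA_le_rival_half hα0 hα1 cl b⟩⟩,
    ⟨fun r _ => le_UhA_bid_half hα0 hα1 ch r,
      fun b _ => ⟨ch, hpbar, UhA_le_rival_half hα0 hα1 ch b⟩⟩⟩

/-- In any α-auction (`0 ≤ α ≤ 1`), each agent's maximin payoff equals `c_i = v_i / 2`,
attained by bidding `c_i`: bidding `c_i` guarantees at least `c_i` against every opponent
bid, and no bid guarantees strictly more. -/
theorem stmt17 (pbar vl vh cl ch : ℕ) (hvl : vl = 2 * cl) (hvh : vh = 2 * ch)
    (hcl : 0 < cl) (hclch : cl < ch) (hpbar : ch ≤ pbar)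
    (α : ℝ) (hα0 : 0 ≤ α) (hα1 : α ≤ 1) :
    ((∀ r ≤ pbar, (cl : ℝ) ≤ UlA vl α cl r) ∧
      (∀ b ≤ pbar, ∃ r ≤ pbar, UlA vl α b r ≤ (cl : ℝ))) ∧
    ((∀ r ≤ pbar, (ch : ℝ) ≤ UhA vh α ch r) ∧
      (∀ b ≤ pbar, ∃ r ≤ pbar, UhA vh α b r ≤ (ch : ℝ))) :=
  stmt17_general pbar vl vh cl ch hvl hvh hclch hpbar α hα0 hα1
end

section
/- In the winner-bid auction with ties to h and payoff-determinant Nash equilibrium bid p = c_l + 1, for any weakly payoff monotone profile σ^λ in which σ_h^λ has full support, the low-valuation agent's expected payoff of bidding c_l − 1 strictly exceeds that of bidding p, and likewise bidding c_l strictly exceeds bidding p; hence σ_l^λ(c_l − 1) ≥ σ_l^λ(p) and σ_l^λ(c_l) ≥ σ_l^λ(p). Specifically, U(δ_{c_l−1}|σ_h^λ; v_l) − U(δ_p|σ_h^λ; v_l) = 2·Σ_{r<c_l−1} σ_h^λ(r) + σ_h^λ(c_l−1)·0 + σ_h^λ(c_l)·1 > 0. -/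
open Finset Filter

/-!
Against a bid `r` of the high-valuation agent, lowering the bid from `p = c_l + 1` to `c_l - 1`
gains `2` if `r < c_l - 1`, nothing at `r = c_l - 1` (where `v_l - p = c_l - 1 = r`), and `1` at
`r = c_l` (the tie now hands her `c_l`); lowering it to `c_l` gains `1` for every `r ≤ c_l`.
Full support of `σ_h` makes the expected gains strictly positive, and weak payoff monotonicity,
read contrapositively, turns them into the inequalities on `σ_l`.
-/

lemma UlWB_sub_UlWB {b b' : ℕ} (hbb' : b ≤ b') (vl r : ℕ) :
    UlWB vl b r - UlWB vl b' r =
      if r < b then (b' - b : ℝ) else if r < b' then (r + b' - vl : ℝ) else 0 := by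
  unfold UlWB
  split_ifs <;> first | omega | ring

lemma eUl_sub_eUl {pbar vl b b' : ℕ} (σh : ℕ → ℝ) (hbb' : b ≤ b') (hb' : b' ≤ pbar + 1) :
    eUl pbar vl σh b - eUl pbar vl σh b' =
      ∑ r ∈ range b', σh r * if r < b then (b' - b : ℝ) else (r + b' - vl : ℝ) := by
  have hterm : ∀ r, σh r * UlWB vl b r - σh r * UlWB vl b' r =
      if r < b' then σh r * if r < b then (b' - b : ℝ) else (r + b' - vl : ℝ) else 0 := by
    intro r
    rw [← mul_sub, UlWB_sub_UlWB hbb']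
    split_ifs <;> first | omega | ring
  unfold eUl
  rw [← sum_sub_distrib, sum_congr rfl fun r _ => hterm r, ← sum_filter]
  congr 1
  ext r
  simp only [mem_filter, mem_range]
  omega

lemma eUl_pred_sub_eUl_succ {pbar cl : ℕ} (σh : ℕ → ℝ) (hcl : 0 < cl) (hclp : cl + 1 ≤ pbar) :
    eUl pbar (2 * cl) σh (cl - 1) - eUl pbar (2 * cl) σh (cl + 1) =
      2 * ∑ r ∈ range (cl - 1), σh r + σh cl := by
  obtain ⟨c, rfl⟩ : ∃ c, cl = c + 1 := ⟨cl - 1, by omega⟩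
  rw [Nat.add_sub_cancel, eUl_sub_eUl σh (by omega) (by omega), sum_range_succ, sum_range_succ,
    sum_congr rfl fun r hr => by rw [if_pos (mem_range.1 hr)], ← sum_mul,
    if_neg (lt_irrefl c), if_neg (by omega)]
  push_cast
  ring

lemma eUl_self_sub_eUl_succ {pbar cl : ℕ} (σh : ℕ → ℝ) (hclp : cl + 1 ≤ pbar) :
    eUl pbar (2 * cl) σh cl - eUl pbar (2 * cl) σh (cl + 1) = ∑ r ∈ range (cl + 1), σh r := by
  rw [eUl_sub_eUl σh (by omega) (by omega)]
  refine sum_congr rfl fun r hr => ?_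
  have : r ≤ cl := Nat.lt_succ_iff.1 (mem_range.1 hr)
  split_ifs with h
  · push_cast; ring
  · have : r = cl := by omega
    subst this; push_cast; ring

lemma WPMl.le_of_eUl_lt {pbar vl a b : ℕ} {σl σh : ℕ → ℝ} (h : WPMl pbar vl σl σh)
    (ha : a ≤ pbar) (hb : b ≤ pbar) (hlt : eUl pbar vl σh a < eUl pbar vl σh b) :
    σl a ≤ σl b :=
  not_lt.1 fun hσ => lt_asymm (h a ha b hb hσ) hlt

theorem stmt19_general (pbar vl cl ch : ℕ) (hvl : vl = 2 * cl)
    (hcl : 0 < cl) (hclch : cl < ch) (hpbar : ch ≤ pbar)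
    (σl σh : ℕ → ℝ)
    (hwpml : WPMl pbar vl σl σh)
    (hfull : ∀ r ≤ pbar, 0 < σh r) :
    (eUl pbar vl σh (cl - 1) - eUl pbar vl σh (cl + 1) =
      2 * (∑ r ∈ Finset.range (cl - 1), σh r) + σh (cl - 1) * 0 + σh cl * 1) ∧
    eUl pbar vl σh (cl + 1) < eUl pbar vl σh (cl - 1) ∧
    eUl pbar vl σh (cl + 1) < eUl pbar vl σh cl ∧
    σl (cl + 1) ≤ σl (cl - 1) ∧
    σl (cl + 1) ≤ σl cl := by
  subst hvl
  have hclp : cl + 1 ≤ pbar := by omega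
  have hgain_pred := eUl_pred_sub_eUl_succ σh hcl hclp
  have hgain_self := eUl_self_sub_eUl_succ σh hclp
  have hsum_pred : 0 ≤ ∑ r ∈ range (cl - 1), σh r :=
    sum_nonneg fun r hr => (hfull r (by have := mem_range.1 hr; omega)).le
  have hsum_self : 0 < ∑ r ∈ range (cl + 1), σh r :=
    sum_pos (fun r hr => hfull r (by have := mem_range.1 hr; omega)) nonempty_range_add_one
  have hσcl : 0 < σh cl := hfull cl (by omega)
  have hlt_pred : eUl pbar (2 * cl) σh (cl + 1) < eUl pbar (2 * cl) σh (cl - 1) := by linarith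
  have hlt_self : eUl pbar (2 * cl) σh (cl + 1) < eUl pbar (2 * cl) σh cl := by linarith
  exact ⟨by rw [hgain_pred]; ring, hlt_pred, hlt_self,
    hwpml.le_of_eUl_lt (by omega) (by omega) hlt_pred,
    hwpml.le_of_eUl_lt (by omega) (by omega) hlt_self⟩

/-- With payoff-determinant bid `p = cl + 1`, for any weakly payoff monotone profile in which
`σh` has full support, the low-valuation agent's expected payoff of bidding `cl - 1`
(respectively `cl`) strictly exceeds that of bidding `p`; hence
`σl (cl - 1) ≥ σl p` and `σl cl ≥ σl p`; moreover the stated payoff-difference identity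
`eUl (cl-1) - eUl p = 2·Σ_{r<cl-1} σh r + σh (cl-1)·0 + σh cl·1` holds. -/
theorem stmt19 (pbar vl vh cl ch : ℕ) (hvl : vl = 2 * cl) (hvh : vh = 2 * ch)
    (hcl : 0 < cl) (hclch : cl < ch) (hpbar : ch ≤ pbar)
    (σl σh : ℕ → ℝ) (hmixl : IsMixed pbar σl) (hmixh : IsMixed pbar σh)
    (hwpml : WPMl pbar vl σl σh) (hwpmh : WPMh pbar vh σl σh)
    (hfull : ∀ r ≤ pbar, 0 < σh r) :
    (eUl pbar vl σh (cl - 1) - eUl pbar vl σh (cl + 1) =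
      2 * (∑ r ∈ Finset.range (cl - 1), σh r) + σh (cl - 1) * 0 + σh cl * 1) ∧
    eUl pbar vl σh (cl + 1) < eUl pbar vl σh (cl - 1) ∧
    eUl pbar vl σh (cl + 1) < eUl pbar vl σh cl ∧
    σl (cl + 1) ≤ σl (cl - 1) ∧
    σl (cl + 1) ≤ σl cl :=
  stmt19_general pbar vl cl ch hvl hcl hclch hpbar σl σh hwpml hfull
end
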